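/- arXiv:1510.02178 — 7 statements merged into one kernel-verified Lean document; each statement's English description precedes it below -/
import Mathlib

section
/- Let (λ, x) be a Laplacian eigenpair of the generalized power hypergraph with loops built from G and d. If u ∈ V is a vertex with λ ≠ d(u), then x_v^k = x_{v'}^k for any two vertices v, v' of the half edge 𝐮 = {u} × {1,…,s}. -/
open scoped BigOperators

/-- `(lam, x)` is a Laplacian eigenpair of the generalized power hypergraph (with loops)
built from the simple graph `G` and the degree function `d` : for every `u ∈ V` and every
vertex `(u, v)` of the half edge `𝐮 = {u} × Fin s`,
`(d u − λ)·x_{(u,v)}^{k−1} = Σ_{w ~ u} (Π_{p ∈ 𝐮, p ≠ (u,v)} x_p)·(Π_{q ∈ 𝐰} x_q)`. -/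
def IsLapEigenpair {V : Type*} [Fintype V] [DecidableEq V] (k s : ℕ)
    (G : SimpleGraph V) [DecidableRel G.Adj]
    (d : V → ℕ) (lam : ℂ) (x : V × Fin s → ℂ) : Prop :=
  x ≠ 0 ∧ ∀ (u : V) (v : Fin s),
    ((d u : ℂ) - lam) * x (u, v) ^ (k - 1) =
      ∑ w ∈ G.neighborFinset u,
        (∏ p ∈ Finset.univ.erase v, x (u, p)) * ∏ q : Fin s, x (w, q)

/-- If `(λ, x)` is a Laplacian eigenpair of the generalized power hypergraph with loops built
from `G` and `d`, and `u` is a vertex with `λ ≠ d u`, then `x_v^k = x_{v'}^k` for any two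
vertices `v, v'` of the half edge `𝐮`. -/
theorem stmt0 {V : Type*} [Fintype V] [DecidableEq V] (k s : ℕ)
    (hk : 4 ≤ k) (hks : k = 2 * s) (G : SimpleGraph V) [DecidableRel G.Adj]
    (d : V → ℕ) (hd : ∀ u, G.degree u ≤ d u)
    (lam : ℂ) (x : V × Fin s → ℂ) (hpair : IsLapEigenpair k s G d lam x)
    (u : V) (hu : lam ≠ (d u : ℂ)) (j j' : Fin s) :
    x (u, j) ^ k = x (u, j') ^ k := by
  obtain ⟨-, heq⟩ := hpair
  have key : ∀ v : Fin s, ((d u : ℂ) - lam) * x (u, v) ^ k =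
      ∑ w ∈ G.neighborFinset u, (∏ p : Fin s, x (u, p)) * ∏ q : Fin s, x (w, q) := by
    intro v
    calc ((d u : ℂ) - lam) * x (u, v) ^ k
        = ((d u : ℂ) - lam) * x (u, v) ^ (k - 1) * x (u, v) := by
          rw [mul_assoc, ← pow_succ]
          congr 2
          omega
      _ = (∑ w ∈ G.neighborFinset u,
            (∏ p ∈ Finset.univ.erase v, x (u, p)) * ∏ q : Fin s, x (w, q)) * x (u, v) := by
          rw [heq u v]
      _ = _ := by
          rw [Finset.sum_mul]
          refine Finset.sum_congr rfl fun w _ => ?_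
          rw [mul_right_comm]
          congr 1
          rw [mul_comm]
          exact Finset.mul_prod_erase Finset.univ (fun p => x (u, p)) (Finset.mem_univ v)
  have hne : ((d u : ℂ) - lam) ≠ 0 := sub_ne_zero.mpr (Ne.symm hu)
  exact mul_left_cancel₀ hne ((key j).trans (key j').symm)
end

section
/- Let (λ, x) be a Laplacian eigenpair of the generalized power hypergraph with loops built from G and d such that x has no zero entries and λ ≠ d(u) for every u ∈ V. For u ∈ V put ε_u := (Π_{p ∈ 𝐮} x_p) / x_{(u,1)}^s and E := diag(ε_u)_{u∈V}. Then the vector y ∈ ℂ^V defined by y_u = x_{(u,1)}^s is nonzero and satisfies (diag(d) − E·A(G)·E)·y = λ·y, where A(G) is the adjacency matrix of G; in particular, λ is an eigenvalue of the complex matrix diag(d) − E·A(G)·E. -/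
open scoped BigOperators
open Matrix

/-- If `(λ, x)` is a Laplacian eigenpair with no zero entries and `λ ≠ d u` for all `u`, then,
with `ε_u := (Π_{p ∈ 𝐮} x_p)/x_{(u,1)}^s` and `E := diag(ε)`, the vector `y_u := x_{(u,1)}^s`
is nonzero and satisfies `(diag(d) − E·A(G)·E)·y = λ·y`; in particular `λ` is an eigenvalue of
the complex matrix `diag(d) − E·A(G)·E`. -/
theorem stmt1 {V : Type*} [Fintype V] [DecidableEq V] (k s : ℕ)
    (hk : 4 ≤ k) (hks : k = 2 * s) (G : SimpleGraph V) [DecidableRel G.Adj]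
    (d : V → ℕ) (hd : ∀ u, G.degree u ≤ d u)
    (lam : ℂ) (x : V × Fin s → ℂ) (hpair : IsLapEigenpair k s G d lam x)
    (hx : ∀ v, x v ≠ 0) (hlam : ∀ u : V, lam ≠ (d u : ℂ))
    (eps : V → ℂ)
    (heps : ∀ u : V, eps u =
      (∏ p : Fin s, x (u, p)) / x (u, (⟨0, by omega⟩ : Fin s)) ^ s)
    (y : V → ℂ) (hy : ∀ u : V, y u = x (u, (⟨0, by omega⟩ : Fin s)) ^ s) :
    y ≠ 0 ∧
      (Matrix.diagonal (fun u : V => (d u : ℂ)) -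
          Matrix.diagonal eps * G.adjMatrix ℂ * Matrix.diagonal eps) *ᵥ y = lam • y := by
  have hs : 2 ≤ s := by omega
  set v0 : Fin s := ⟨0, by omega⟩ with hv0
  -- every y u is nonzero
  have hyne : ∀ u, y u ≠ 0 := by
    intro u
    rw [hy]
    exact pow_ne_zero s (hx _)
  -- key scalar identity
  have key : ∀ u : V, ((d u : ℂ) - lam) * y u =
      eps u * ∑ w ∈ G.neighborFinset u, eps w * y w := by
    intro u
    have hx0 : x (u, v0) ≠ 0 := hx _
    have heq := hpair.2 u v0
    -- eps w * y w = ∏ q, x (w, q)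
    have hw : ∀ w : V, eps w * y w = ∏ q : Fin s, x (w, q) := by
      intro w
      rw [heps, hy]
      exact div_mul_cancel₀ _ (pow_ne_zero s (hx _))
    -- eps u * x(u,v0)^(s-1) = ∏ over erase
    have hpow : x (u, v0) ^ s = x (u, v0) * x (u, v0) ^ (s - 1) := by
      rw [← pow_succ']
      congr 1
      omega
    have hprod : (∏ p : Fin s, x (u, p)) =
        x (u, v0) * ∏ p ∈ Finset.univ.erase v0, x (u, p) :=
      (Finset.mul_prod_erase Finset.univ _ (Finset.mem_univ v0)).symm
    have h1 : eps u * x (u, v0) ^ (s - 1) =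
        ∏ p ∈ Finset.univ.erase v0, x (u, p) := by
      apply mul_left_cancel₀ hx0
      calc x (u, v0) * (eps u * x (u, v0) ^ (s - 1))
          = eps u * (x (u, v0) * x (u, v0) ^ (s - 1)) := by ring
        _ = eps u * x (u, v0) ^ s := by rw [← hpow]
        _ = eps u * y u := by rw [hy]
        _ = ∏ p : Fin s, x (u, p) := hw u
        _ = x (u, v0) * ∏ p ∈ Finset.univ.erase v0, x (u, p) := hprod
    -- rewrite the eigen equation
    have hk1 : k - 1 = (s - 1) + s := by omega
    have heq2 : x (u, v0) ^ (s - 1) * (((d u : ℂ) - lam) * y u) =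
        x (u, v0) ^ (s - 1) * (eps u * ∑ w ∈ G.neighborFinset u, eps w * y w) := by
      calc x (u, v0) ^ (s - 1) * (((d u : ℂ) - lam) * y u)
          = ((d u : ℂ) - lam) * x (u, v0) ^ (k - 1) := by
            rw [hk1, pow_add, hy]; ring
        _ = ∑ w ∈ G.neighborFinset u,
              (∏ p ∈ Finset.univ.erase v0, x (u, p)) * ∏ q : Fin s, x (w, q) := heq
        _ = ∑ w ∈ G.neighborFinset u,
              (eps u * x (u, v0) ^ (s - 1)) * (eps w * y w) := by
            refine Finset.sum_congr rfl fun w _ => ?_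
            rw [h1, hw]
        _ = x (u, v0) ^ (s - 1) *
              (eps u * ∑ w ∈ G.neighborFinset u, eps w * y w) := by
            rw [Finset.mul_sum, Finset.mul_sum]
            refine Finset.sum_congr rfl fun w _ => ?_
            ring
    exact mul_left_cancel₀ (pow_ne_zero _ hx0) heq2
  constructor
  · intro h0
    rcases Function.ne_iff.mp hpair.1 with ⟨p, hp⟩
    exact hyne p.1 (congrFun h0 p.1)
  · funext u
    have hmv : ((Matrix.diagonal (fun u : V => (d u : ℂ)) -
        Matrix.diagonal eps * G.adjMatrix ℂ * Matrix.diagonal eps) *ᵥ y) u =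
        (d u : ℂ) * y u -
          eps u * ∑ w ∈ G.neighborFinset u, eps w * y w := by
      rw [Matrix.sub_mulVec]
      simp only [Pi.sub_apply, Matrix.mulVec_diagonal]
      congr 1
      rw [← Matrix.mulVec_mulVec, ← Matrix.mulVec_mulVec,
        Matrix.mulVec_diagonal, SimpleGraph.adjMatrix_mulVec_apply]
      congr 1
      refine Finset.sum_congr rfl fun w _ => ?_
      rw [Matrix.mulVec_diagonal]
    rw [hmv, ← key u]
    simp only [Pi.smul_apply, smul_eq_mul]
    ring
end

section
/- Let E = diag(ε_u)_{u∈V} be a diagonal matrix with every ε_u a k-th root of unity (ε_u^k = 1). Then every eigenvalue λ of the complex matrix diag(d) − E·A(G)·E, where A(G) is the adjacency matrix of G, is an eigenvalue of the Laplacian tensor of the generalized power hypergraph with loops built from G and d; that is, there exists x : V × {1,…,s} → ℂ, x ≠ 0, such that (λ, x) is a Laplacian eigenpair. -/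
open scoped BigOperators
open Matrix

/-- If every `ε_u` is a `k`-th root of unity and `E = diag(ε)`, then every eigenvalue of the
complex matrix `diag(d) − E·A(G)·E` is an eigenvalue of the Laplacian tensor of the generalized
power hypergraph with loops built from `G` and `d`. -/
theorem stmt3 {V : Type*} [Fintype V] [DecidableEq V] (k s : ℕ)
    (hk : 4 ≤ k) (hks : k = 2 * s) (G : SimpleGraph V) [DecidableRel G.Adj]
    (d : V → ℕ) (hd : ∀ u, G.degree u ≤ d u)
    (eps : V → ℂ) (heps : ∀ u : V, eps u ^ k = 1)
    (lam : ℂ)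
    (hlam : ∃ y : V → ℂ, y ≠ 0 ∧
      (Matrix.diagonal (fun u : V => (d u : ℂ)) -
          Matrix.diagonal eps * G.adjMatrix ℂ * Matrix.diagonal eps) *ᵥ y = lam • y) :
    ∃ x : V × Fin s → ℂ, IsLapEigenpair k s G d lam x := by
  obtain ⟨y, hy, hEq⟩ := hlam
  have hk0 : k ≠ 0 := by omega
  have hs2 : 2 ≤ s := by omega
  have hs0 : 0 < s := by omega
  have heps0 : ∀ u, eps u ≠ 0 := fun u h => by
    have := heps u; rw [h, zero_pow hk0] at this; exact one_ne_zero this.symm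
  -- key identity from the matrix eigenvector equation
  have hkey : ∀ u, eps u * ∑ w ∈ G.neighborFinset u, eps w * y w
      = ((d u : ℂ) - lam) * y u := by
    intro u
    have h := congrFun hEq u
    rw [Matrix.sub_mulVec] at h
    have h1 : ((Matrix.diagonal (fun u : V => (d u : ℂ))) *ᵥ y) u = (d u : ℂ) * y u :=
      Matrix.mulVec_diagonal _ _ _
    have h2 : ((Matrix.diagonal eps * G.adjMatrix ℂ * Matrix.diagonal eps) *ᵥ y) u
        = eps u * ∑ w ∈ G.neighborFinset u, eps w * y w := by
      rw [← Matrix.mulVec_mulVec, ← Matrix.mulVec_mulVec, Matrix.mulVec_diagonal]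
      congr 1
      rw [SimpleGraph.adjMatrix_mulVec_apply]
      exact Finset.sum_congr rfl fun w _ => Matrix.mulVec_diagonal _ _ _
    simp only [Pi.sub_apply, Pi.smul_apply, smul_eq_mul, h1, h2] at h
    linear_combination -h
  -- construction of the eigenvector x
  set b : V → ℂ := fun u => (y u ^ 2) ^ ((k : ℂ)⁻¹) with hb
  have hbk : ∀ u, b u ^ k = y u ^ 2 := fun u => Complex.cpow_nat_inv_pow _ hk0
  have hbne : ∀ u, y u ≠ 0 → b u ≠ 0 := by
    intro u hyu h
    apply hyu
    have := hbk u
    rw [h, zero_pow hk0] at this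
    exact pow_eq_zero_iff (n := 2) (by norm_num) |>.mp this.symm
  have hb0 : ∀ u, y u = 0 → b u = 0 := by
    intro u hyu
    have h := hbk u
    rw [hyu] at h
    have h' : b u ^ k = 0 := by simpa using h
    exact pow_eq_zero_iff hk0 |>.mp h'
  set c : V → ℂ := fun u => eps u * y u / b u ^ s with hc
  set q0 : Fin s := ⟨0, hs0⟩ with hq0
  set x : V × Fin s → ℂ := fun p => if p.2 = q0 then c p.1 * b p.1 else b p.1 with hx
  -- product over all coordinates of a vertex
  have hprodall : ∀ w, ∏ q : Fin s, x (w, q) = eps w * y w := by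
    intro w
    have hsplit : ∏ q : Fin s, x (w, q)
        = x (w, q0) * ∏ q ∈ Finset.univ.erase q0, x (w, q) :=
      (Finset.mul_prod_erase _ _ (Finset.mem_univ q0)).symm
    have herase : ∏ q ∈ Finset.univ.erase q0, x (w, q) = b w ^ (s - 1) := by
      rw [Finset.prod_congr rfl (fun q hq => ?_), Finset.prod_const,
        Finset.card_erase_of_mem (Finset.mem_univ q0), Finset.card_univ, Fintype.card_fin]
      simp only [hx, if_neg (Finset.ne_of_mem_erase hq)]
    rcases eq_or_ne (y w) 0 with hyw | hyw
    · rw [hsplit, herase, hb0 w hyw, hyw, zero_pow (by omega), mul_zero, mul_zero]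
    · have hbw := hbne w hyw
      have hpow : b w * b w ^ (s - 1) = b w ^ s := by
        rw [← pow_succ']; congr 1; omega
      rw [hsplit, herase]
      simp only [hx, if_pos rfl, hc]
      rw [mul_assoc, hpow]
      exact div_mul_cancel₀ _ (pow_ne_zero s hbw)
  refine ⟨x, ?_, ?_⟩
  · -- x ≠ 0
    intro h
    apply hy
    funext u
    by_contra hyu
    have hbu := hbne u hyu
    have hcu : c u ≠ 0 := by
      simp only [hc]
      exact div_ne_zero (mul_ne_zero (heps0 u) hyu) (pow_ne_zero s hbu)
    have hzero : x (u, q0) = 0 := congrFun h (u, q0)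
    simp only [hx, if_pos rfl] at hzero
    exact (mul_ne_zero hcu hbu) hzero
  · intro u v
    -- rewrite RHS
    have hRHS : ∑ w ∈ G.neighborFinset u,
        (∏ p ∈ Finset.univ.erase v, x (u, p)) * ∏ q : Fin s, x (w, q)
        = (∏ p ∈ Finset.univ.erase v, x (u, p)) * ∑ w ∈ G.neighborFinset u, eps w * y w := by
      rw [Finset.mul_sum]
      exact Finset.sum_congr rfl fun w _ => by rw [hprodall w]
    rw [hRHS]
    rcases eq_or_ne (y u) 0 with hyu | hyu
    · -- all coordinates at u vanish
      have hxu : ∀ p : Fin s, x (u, p) = 0 := by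
        intro p
        simp only [hx]
        split <;> simp [hb0 u hyu]
      have hvne : ∃ p : Fin s, p ≠ v := by
        rcases eq_or_ne v q0 with rfl | hv
        · exact ⟨⟨1, by omega⟩, by simp [hq0, Fin.ext_iff]⟩
        · exact ⟨q0, fun h => hv h.symm⟩
      obtain ⟨p, hp⟩ := hvne
      rw [hxu v, zero_pow (by omega), mul_zero,
        Finset.prod_eq_zero (Finset.mem_erase.mpr ⟨hp, Finset.mem_univ p⟩) (hxu p), zero_mul]
    · -- nonzero case: cancel x (u, v)
      have hbu := hbne u hyu
      have hcu : c u ≠ 0 := by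
        simp only [hc]
        exact div_ne_zero (mul_ne_zero (heps0 u) hyu) (pow_ne_zero s hbu)
      have hxv : x (u, v) ≠ 0 := by
        simp only [hx]
        split
        · exact mul_ne_zero hcu hbu
        · exact hbu
      apply mul_right_cancel₀ hxv
      have hbs : (b u ^ s) ^ k = y u ^ k := by
        rw [← pow_mul, mul_comm, pow_mul, hbk, ← pow_mul, ← hks]
      have hcuk : c u ^ k = 1 := by
        simp only [hc]
        rw [div_pow, hbs, mul_pow, heps, one_mul, div_self (pow_ne_zero k hyu)]
      have hxk : x (u, v) ^ (k - 1) * x (u, v) = y u ^ 2 := by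
        rw [← pow_succ, show k - 1 + 1 = k by omega]
        simp only [hx]
        split
        · rw [mul_pow, hcuk, one_mul, hbk]
        · exact hbk u
      have hxall : (∏ p ∈ Finset.univ.erase v, x (u, p)) * x (u, v) = eps u * y u := by
        rw [mul_comm]
        exact (Finset.mul_prod_erase Finset.univ (fun p => x (u, p))
          (Finset.mem_univ v)).trans (hprodall u)
      calc ((d u : ℂ) - lam) * x (u, v) ^ (k - 1) * x (u, v)
          = ((d u : ℂ) - lam) * (x (u, v) ^ (k - 1) * x (u, v)) := by ring
        _ = ((d u : ℂ) - lam) * y u ^ 2 := by rw [hxk]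
        _ = (eps u * y u) * ((eps u)⁻¹ * (((d u : ℂ) - lam) * y u)) := by
            rw [mul_comm (eps u) (y u), mul_assoc, mul_inv_cancel_left₀ (heps0 u)]
            ring
        _ = (eps u * y u) * ((eps u)⁻¹ * (eps u * ∑ w ∈ G.neighborFinset u, eps w * y w)) := by
            rw [hkey u]
        _ = ((∏ p ∈ Finset.univ.erase v, x (u, p)) * x (u, v))
              * ∑ w ∈ G.neighborFinset u, eps w * y w := by
            rw [hxall, inv_mul_cancel_left₀ (heps0 u)]
        _ = (∏ p ∈ Finset.univ.erase v, x (u, p))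
              * (∑ w ∈ G.neighborFinset u, eps w * y w) * x (u, v) := by ring
end

section
/- Every eigenvalue λ of the real symmetric matrix diag(d) − A(G), where A(G) is the adjacency matrix of G, is an H-eigenvalue of the Laplacian tensor of the generalized power hypergraph with loops built from G and d; that is, there exists a real vector x : V × {1,…,s} → ℝ, x ≠ 0, such that (λ, x) is a Laplacian eigenpair. -/
open scoped BigOperators
open Matrix

/-- Every eigenvalue of the real symmetric matrix `diag(d) − A(G)` is an `H`-eigenvalue of the
Laplacian tensor of the generalized power hypergraph with loops built from `G` and `d`: there
is a nonzero real vector `x` such that `(λ, x)` is a Laplacian eigenpair. -/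
theorem stmt4 {V : Type*} [Fintype V] [DecidableEq V] (k s : ℕ)
    (hk : 4 ≤ k) (hks : k = 2 * s) (G : SimpleGraph V) [DecidableRel G.Adj]
    (d : V → ℕ) (hd : ∀ u, G.degree u ≤ d u)
    (lam : ℝ)
    (hlam : ∃ y : V → ℝ, y ≠ 0 ∧
      (Matrix.diagonal (fun u : V => (d u : ℝ)) - G.adjMatrix ℝ) *ᵥ y = lam • y) :
    ∃ x : V × Fin s → ℝ,
      IsLapEigenpair k s G d (lam : ℂ) (fun v => (x v : ℂ)) := by
  obtain ⟨y, hy0, hlam⟩ := hlam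
  have hs2 : 2 ≤ s := by omega
  haveI : NeZero s := ⟨by omega⟩
  set t : V → ℝ := fun u => |y u| ^ ((s : ℝ)⁻¹) with ht
  set e : V → Fin s → ℝ := fun u p => if y u < 0 ∧ p = 0 then -1 else 1 with he
  set x : V × Fin s → ℝ := fun up => e up.1 up.2 * t up.1 with hx
  have hts : ∀ u, t u ^ s = |y u| := by
    intro u
    rw [ht, ← Real.rpow_natCast (|y u| ^ ((s : ℝ)⁻¹)) s, ← Real.rpow_mul (abs_nonneg _),
      inv_mul_cancel₀ (by positivity : (s:ℝ) ≠ 0), Real.rpow_one]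
  have he1 : ∀ u p, e u p = 1 ∨ e u p = -1 := by
    intro u p; simp only [he]; split <;> simp
  have hesign : ∀ u, (∏ p : Fin s, e u p) = if y u < 0 then -1 else 1 := by
    intro u; by_cases h : y u < 0
    · simp only [he, h, true_and, if_pos h]
      exact (Finset.prod_ite_eq' Finset.univ (0 : Fin s) (fun _ => (-1:ℝ))).trans (by simp)
    · simp [he, h]
  have heig : ∀ u, (∑ w ∈ G.neighborFinset u, y w) = ((d u : ℝ) - lam) * y u := by
    intro u
    have h := congrFun hlam u
    simp [Matrix.sub_mulVec, Matrix.mulVec_diagonal, SimpleGraph.adjMatrix_mulVec_apply] at h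
    linarith
  have hprodw : ∀ w, (∏ q : Fin s, x (w, q)) = y w := by
    intro w
    simp only [hx]
    rw [Finset.prod_mul_distrib, Finset.prod_const, Finset.card_univ, Fintype.card_fin,
      hts, hesign]
    by_cases h : y w < 0
    · rw [if_pos h, abs_of_neg h]; ring
    · rw [if_neg h, abs_of_nonneg (not_lt.1 h)]; ring
  have key : ∀ (u : V) (v : Fin s),
      ((d u : ℝ) - lam) * x (u, v) ^ (k - 1) =
        ∑ w ∈ G.neighborFinset u,
          (∏ p ∈ Finset.univ.erase v, x (u, p)) * ∏ q : Fin s, x (w, q) := by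
    intro u v
    have hcard : (Finset.univ.erase v).card = s - 1 := by
      rw [Finset.card_erase_of_mem (Finset.mem_univ v), Finset.card_univ, Fintype.card_fin]
    have hprodx : ∏ p ∈ Finset.univ.erase v, x (u, p) =
        (∏ p ∈ Finset.univ.erase v, e u p) * t u ^ (s - 1) := by
      simp only [hx]
      rw [Finset.prod_mul_distrib, Finset.prod_const, hcard]
    have hRHS : ∑ w ∈ G.neighborFinset u,
          (∏ p ∈ Finset.univ.erase v, x (u, p)) * ∏ q : Fin s, x (w, q)
        = (∏ p ∈ Finset.univ.erase v, e u p) * t u ^ (s - 1) * (((d u : ℝ) - lam) * y u) := by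
      rw [← heig u, Finset.mul_sum]
      exact Finset.sum_congr rfl fun w _ => by rw [hprodx, hprodw]
    rw [hRHS]
    have hxe : x (u, v) = e u v * t u := rfl
    have hek : e u v ^ (k - 1) = e u v := by
      rcases he1 u v with h | h <;> rw [h]
      · exact one_pow _
      · exact Odd.neg_one_pow ⟨s - 1, by omega⟩
    have hk1 : k - 1 = (s - 1) + s := by omega
    rw [hxe, mul_pow, hek, hk1, pow_add, hts]
    have hA : (∏ p ∈ Finset.univ.erase v, e u p) * e u v = if y u < 0 then -1 else 1 :=
      (Finset.prod_erase_mul _ _ (Finset.mem_univ v)).trans (hesign u)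
    by_cases hyu : y u < 0
    · rw [if_pos hyu] at hA
      have hA2 : (∏ p ∈ Finset.univ.erase v, e u p) = -(e u v) := by
        rcases he1 u v with h | h <;> rw [h] at hA ⊢ <;> linarith
      rw [hA2, abs_of_neg hyu]; ring
    · rw [if_neg hyu] at hA
      have hA2 : (∏ p ∈ Finset.univ.erase v, e u p) = e u v := by
        rcases he1 u v with h | h <;> rw [h] at hA ⊢ <;> linarith
      rw [hA2, abs_of_nonneg (not_lt.1 hyu)]; ring
  refine ⟨x, ?_, ?_⟩
  · obtain ⟨u0, hu0⟩ := Function.ne_iff.1 hy0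
    intro hcontra
    have h0 := congrFun hcontra (u0, 0)
    simp only [Pi.zero_apply, Complex.ofReal_eq_zero] at h0
    have htp : 0 < t u0 := Real.rpow_pos_of_pos (abs_pos.2 hu0) _
    have hep : e u0 0 ≠ 0 := by rcases he1 u0 0 with h | h <;> rw [h] <;> norm_num
    exact (mul_ne_zero hep htp.ne') h0
  · intro u v
    have := key u v
    push_cast
    exact_mod_cast congrArg (Complex.ofReal) this
end

section
/- For a finite simple graph G, the set of eigenvalues of the signless Laplacian tensor Q(G^{k,k/2}) equals the union, over all nonempty subsets U ⊆ V with the induced subgraph G[U] connected and all diagonal matrices E = diag(ε_u)_{u∈U} whose entries are k-th roots of unity, of the sets of eigenvalues of the complex matrices D_U + E·A_U·E; and the set of H-eigenvalues of Q(G^{k,k/2}) equals the union, over all nonempty U ⊆ V with G[U] connected, of the sets of eigenvalues of the real symmetric matrices D_U + A_U. -/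
open scoped BigOperators
open Matrix

/-- `lam` is an eigenvalue of the signless Laplacian tensor `Q(G^{k,k/2})` of the generalized
power hypergraph `G^{k,k/2}` with eigenvector `x`. -/
def IsSignlessLapEigenpair {V : Type*} [Fintype V] [DecidableEq V] (k s : ℕ)
    (G : SimpleGraph V) [DecidableRel G.Adj]
    (lam : ℂ) (x : V × Fin s → ℂ) : Prop :=
  x ≠ 0 ∧ ∀ (u : V) (v : Fin s),
    (lam - (G.degree u : ℂ)) * x (u, v) ^ (k - 1) =
      ∑ w ∈ G.neighborFinset u,
        (∏ p ∈ Finset.univ.erase v, x (u, p)) * ∏ q : Fin s, x (w, q)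

/-!
Write `P u = ∏ q, x (u, q)` for the product of `x` over the half edge of `u`. Multiplying the
eigen-equation at `(u, v)` by `x (u, v)` gives `(λ - d u) * x (u, v) ^ k = P u * ∑_{w ∼ u} P w`.
If `λ` is a vertex degree `d u`, the `1 × 1` block `{u}` already has eigenvalue `λ`. Otherwise this
identity shows that `x (u, ·) ^ k` is constant on each half edge and that the support of `x` is a
union of half edges; on a connected piece `U` of `G` restricted to that support, closed under
adjacency within the support, `y u = x (u, v₀) ^ s` and `ε u = P u / y u` satisfy `ε u ^ k = 1`
and `(D_U + E A_U E) y = λ y`. Conversely, from `(U, ε, y)` pick `s`-th roots `c u` of `y u` and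
put `x (u, v₀) = ε u * c u`, `x (u, v) = c u` for `v ≠ v₀`, and `x = 0` off `U`.

For real eigenvectors `ε = ±1`, and conjugation by `E = diag ε` turns `D_U + E A_U E` into
`D_U + A_U`; conversely, conjugating by the signs of a real eigenvector of `D_U + A_U` makes it
nonnegative, so that it has real `s`-th roots.
-/

namespace SimpleGraph

variable {V : Type*} [Fintype V] (G : SimpleGraph V)

theorem exists_finset_induce_connected_adj_closed [DecidableEq V] {S : Set V} {u₀ : V}
    (hu₀ : u₀ ∈ S) :
    ∃ U : Finset V, u₀ ∈ U ∧ ↑U ⊆ S ∧ (G.induce (U : Set V)).Connected ∧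
      ∀ u ∈ U, ∀ w ∈ S, G.Adj u w → w ∈ U := by
  obtain ⟨U, hu₀U, ⟨hUS, hUconn⟩, hmax⟩ :=
    Finite.exists_le_maximal (α := Finset V)
      (p := fun T => ↑T ⊆ S ∧ (G.induce (T : Set V)).Connected) (a := {u₀})
      ⟨by simpa using hu₀, by
        rw [Finset.coe_singleton, induce_singleton_eq_top]; exact connected_top⟩
  refine ⟨U, Finset.singleton_subset_iff.mp hu₀U, hUS, hUconn, fun u hu w hw huw => ?_⟩
  have hconn : (G.induce ((insert w U : Finset V) : Set V)).Connected := by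
    rw [Finset.coe_insert, ← Set.union_singleton]
    exact G.connected_induce_union hUconn.preconnected (by simp) hu rfl huw
  exact hmax ⟨by simpa [Set.insert_subset_iff] using ⟨hw, hUS⟩, hconn⟩
    (Finset.subset_insert w U) (Finset.mem_insert_self w U)

theorem sum_adjMatrix_mul_eq_sum_neighborFinset [DecidableRel G.Adj] {R : Type*}
    [NonAssocSemiring R] (U : Finset V) (u : V) (f : V → R)
    (hf : ∀ w, G.Adj u w → w ∉ U → f w = 0) :
    ∑ w : U, G.adjMatrix R u w * f w = ∑ w ∈ G.neighborFinset u, f w := by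
  rw [Finset.sum_coe_sort U (fun w => G.adjMatrix R u w * f w), ← adjMatrix_mulVec_apply,
    Matrix.mulVec, dotProduct]
  refine Finset.sum_subset (Finset.subset_univ U) fun w _ hw => ?_
  by_cases huw : G.Adj u w
  · simp [hf w huw hw]
  · simp [huw]

theorem diagonal_add_conj_adjMatrix_mulVec_apply [DecidableEq V] [DecidableRel G.Adj] {R : Type*}
    [CommRing R] {U : Finset V} (d eps y : U → R) (f : V → R)
    (hfU : ∀ w : U, f w = eps w * y w) (u : U) (hf : ∀ w, G.Adj u w → w ∉ U → f w = 0) :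
    ((diagonal d + diagonal eps * (G.adjMatrix R).submatrix Subtype.val Subtype.val *
        diagonal eps) *ᵥ y) u = d u * y u + eps u * ∑ w ∈ G.neighborFinset u, f w := by
  rw [add_mulVec, Pi.add_apply, mulVec_diagonal, ← mulVec_mulVec, ← mulVec_mulVec,
    mulVec_diagonal, ← G.sum_adjMatrix_mul_eq_sum_neighborFinset U u f hf]
  have hEy : diagonal eps *ᵥ y = eps * y := funext (mulVec_diagonal eps y)
  simp only [hEy, hfU]
  rfl

end SimpleGraph

theorem Pi.mul_ne_zero_of_mul_self_eq_one {n R : Type*} [CommRing R] {eps y : n → R}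
    (h : ∀ i, eps i * eps i = 1) (hy : y ≠ 0) : eps * y ≠ 0 := fun h0 =>
  hy (funext fun i => by simpa [← mul_assoc, h] using congrArg (eps i * ·) (congrFun h0 i))

namespace Matrix

variable {n R : Type*} [Fintype n] [DecidableEq n] [CommRing R]

theorem diagonal_mul_diagonal_self {eps : n → R} (h : ∀ i, eps i * eps i = 1) :
    diagonal eps * diagonal eps = 1 := by
  rw [diagonal_mul_diagonal, ← diagonal_one]
  exact congrArg diagonal (funext h)

theorem diagonal_mul_add_mul_diagonal {eps : n → R} (h : ∀ i, eps i * eps i = 1)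
    (d : n → R) (B : Matrix n n R) :
    diagonal eps * (diagonal d + B) * diagonal eps =
      diagonal d + diagonal eps * B * diagonal eps := by
  rw [mul_add, add_mul, diagonal_mul_diagonal, diagonal_mul_diagonal]
  congr 2
  ext i
  rw [mul_comm, ← mul_assoc, h, one_mul]

theorem mulVec_conj_diagonal_eq_smul {eps : n → R} (h : ∀ i, eps i * eps i = 1)
    {M : Matrix n n R} {y : n → R} {lam : R} (hy : M *ᵥ y = lam • y) :
    (diagonal eps * M * diagonal eps) *ᵥ (eps * y) = lam • (eps * y) := by
  have hEy : diagonal eps *ᵥ (eps * y) = y := by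
    ext i; rw [mulVec_diagonal, Pi.mul_apply, ← mul_assoc, h, one_mul]
  rw [← mulVec_mulVec, hEy, ← mulVec_mulVec, hy, mulVec_smul]
  ext i
  simp only [Pi.smul_apply, mulVec_diagonal, Pi.mul_apply, smul_eq_mul]

theorem diagonal_add_conj_mulVec_mul_eq_smul {eps : n → R}
    (h : ∀ i, eps i * eps i = 1) {d y : n → R} {B : Matrix n n R} {lam : R}
    (hy : (diagonal d + B) *ᵥ y = lam • y) :
    (diagonal d + diagonal eps * B * diagonal eps) *ᵥ (eps * y) = lam • (eps * y) := by
  rw [← diagonal_mul_add_mul_diagonal h]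
  exact mulVec_conj_diagonal_eq_smul h hy

variable [LinearOrder R] [IsStrictOrderedRing R]

theorem exists_diagonal_add_mulVec_eq_smul_of_conj {k : ℕ} (hk : k ≠ 0) {d eps y : n → R}
    {A : Matrix n n R} (heps : ∀ i, eps i ^ (2 * k) = 1) (hy : y ≠ 0) {lam : R}
    (h : (diagonal d + diagonal eps * A * diagonal eps) *ᵥ y = lam • y) :
    ∃ y' : n → R, y' ≠ 0 ∧ (diagonal d + A) *ᵥ y' = lam • y' := by
  have hee : ∀ i, eps i * eps i = 1 := fun i =>
    (pow_eq_one_iff_of_nonneg (mul_self_nonneg (eps i)) hk).mp (by rw [← sq, ← pow_mul, heps])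
  refine ⟨eps * y, Pi.mul_ne_zero_of_mul_self_eq_one hee hy, ?_⟩
  have hEE := diagonal_mul_diagonal_self hee
  simpa only [← mul_assoc, hEE, one_mul, mul_assoc _ (diagonal eps), mul_one] using
    diagonal_add_conj_mulVec_mul_eq_smul hee h

theorem exists_diagonal_add_conj_mulVec_abs_eq_smul {d y : n → R} {A : Matrix n n R} {lam : R}
    (h : (diagonal d + A) *ᵥ y = lam • y) :
    ∃ eps : n → R, (∀ i, eps i * eps i = 1) ∧
      (diagonal d + diagonal eps * A * diagonal eps) *ᵥ (fun i => |y i|) =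
        lam • fun i => |y i| := by
  let eps : n → R := fun i => if 0 ≤ y i then 1 else -1
  have hee : ∀ i, eps i * eps i = 1 := fun i => by by_cases hi : 0 ≤ y i <;> simp [eps, hi]
  have habs : eps * y = fun i => |y i| := funext fun i => by
    by_cases hi : 0 ≤ y i
    · simp [eps, hi, abs_of_nonneg hi]
    · simp [eps, hi, abs_of_neg (not_le.mp hi)]
  exact ⟨eps, hee, habs ▸ diagonal_add_conj_mulVec_mul_eq_smul hee h⟩

end Matrix

section

variable {V : Type*} [Fintype V] (G : SimpleGraph V) [DecidableRel G.Adj]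

def SignlessLapEigenEq {R : Type*} [CommRing R] (k s : ℕ) (lam : R) (x : V × Fin s → R) :
    Prop :=
  ∀ (u : V) (v : Fin s),
    (lam - (G.degree u : R)) * x (u, v) ^ (k - 1) =
      ∑ w ∈ G.neighborFinset u,
        (∏ p ∈ Finset.univ.erase v, x (u, p)) * ∏ q : Fin s, x (w, q)

theorem isSignlessLapEigenpair_iff [DecidableEq V] {k s : ℕ} {lam : ℂ} {x : V × Fin s → ℂ} :
    IsSignlessLapEigenpair k s G lam x ↔ x ≠ 0 ∧ SignlessLapEigenEq G k s lam x :=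
  Iff.rfl

theorem signlessLapEigenEq_map_iff {R S : Type*} [CommRing R] [CommRing S] {f : R →+* S}
    (hf : Function.Injective f) {k s : ℕ} {lam : R} {x : V × Fin s → R} :
    SignlessLapEigenEq G k s (f lam) (f ∘ x) ↔ SignlessLapEigenEq G k s lam x := by
  unfold SignlessLapEigenEq
  simp only [Function.comp_apply, ← map_natCast f, ← map_sub, ← map_pow, ← map_prod, ← map_mul,
    ← map_sum, hf.eq_iff]

theorem isSignlessLapEigenpair_ofReal_iff [DecidableEq V] {k s : ℕ} {lam : ℝ}
    {x : V × Fin s → ℝ} :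
    IsSignlessLapEigenpair k s G (lam : ℂ) (fun p => (x p : ℂ)) ↔
      x ≠ 0 ∧ SignlessLapEigenEq G k s lam x := by
  rw [isSignlessLapEigenpair_iff, ← signlessLapEigenEq_map_iff G (f := Complex.ofRealHom)
    Complex.ofReal_injective]
  refine and_congr_left' (not_congr ⟨fun h => funext fun p => ?_, fun h => by subst h; rfl⟩)
  simpa using congrFun h p

namespace SignlessLapEigenEq

variable {G} {R : Type*} [CommRing R] {k s : ℕ} {lam : R} {x : V × Fin s → R}

theorem mul_pow_eq (hx : SignlessLapEigenEq G k s lam x) (hk : k ≠ 0) (u : V) (v : Fin s) :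
    (lam - G.degree u) * x (u, v) ^ k =
      (∏ q, x (u, q)) * ∑ w ∈ G.neighborFinset u, ∏ q, x (w, q) := by
  rw [← Finset.mul_prod_erase _ _ (Finset.mem_univ v),
    ← Nat.sub_add_cancel (Nat.one_le_iff_ne_zero.mpr hk), pow_succ, ← mul_assoc, hx u v,
    Finset.sum_mul, Finset.mul_sum]
  exact Finset.sum_congr rfl fun w _ => by ring

theorem prod_ne_zero [IsDomain R] (hx : SignlessLapEigenEq G k s lam x) {u : V}
    (hlam : lam ≠ G.degree u) {v : Fin s} (hxu : x (u, v) ≠ 0) : ∏ q, x (u, q) ≠ 0 := by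
  intro hP
  obtain ⟨p, -, hp⟩ := Finset.prod_eq_zero_iff.mp hP
  have hpv : p ≠ v := by rintro rfl; exact hxu hp
  have hzero : (lam - G.degree u) * x (u, v) ^ (k - 1) = 0 := by
    rw [hx u v]
    refine Finset.sum_eq_zero fun w _ => ?_
    rw [Finset.prod_eq_zero (Finset.mem_erase.mpr ⟨hpv, Finset.mem_univ p⟩) hp, zero_mul]
  exact mul_ne_zero (sub_ne_zero.mpr hlam) (pow_ne_zero _ hxu) hzero

theorem pow_eq_pow [IsDomain R] (hx : SignlessLapEigenEq G k s lam x) (hk : k ≠ 0) {u : V}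
    (hlam : lam ≠ G.degree u) (v v' : Fin s) : x (u, v) ^ k = x (u, v') ^ k :=
  mul_left_cancel₀ (sub_ne_zero.mpr hlam)
    ((hx.mul_pow_eq hk u v).trans (hx.mul_pow_eq hk u v').symm)

end SignlessLapEigenEq

end

section

variable {V R : Type*} [CommRing R] {s : ℕ}

def halfEdgeLift (v₀ : Fin s) (eps c : V → R) : V × Fin s → R :=
  fun p => (if p.2 = v₀ then eps p.1 else 1) * c p.1

theorem prod_halfEdgeLift (v₀ : Fin s) (eps c : V → R) (u : V) (S : Finset (Fin s)) :
    ∏ p ∈ S, halfEdgeLift v₀ eps c (u, p) = (if v₀ ∈ S then eps u else 1) * c u ^ S.card := by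
  simp only [halfEdgeLift]
  rw [Finset.prod_mul_distrib, Finset.prod_ite_eq', Finset.prod_const]

end

def IsTwistedBlockEigenvalue {V F : Type*} [Fintype V] [DecidableEq V] [Field F]
    (G : SimpleGraph V) [DecidableRel G.Adj] (k : ℕ) (lam : F) : Prop :=
  ∃ U : Finset V, U.Nonempty ∧ (G.induce (U : Set V)).Connected ∧
    ∃ eps : U → F, (∀ u, eps u ^ k = 1) ∧ ∃ y : U → F, y ≠ 0 ∧
      (diagonal (fun u : U => (G.degree u.1 : F)) +
        diagonal eps * (G.adjMatrix F).submatrix Subtype.val Subtype.val * diagonal eps) *ᵥ y =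
          lam • y

section Correspondence

variable {V : Type*} [Fintype V] {G : SimpleGraph V} [DecidableRel G.Adj]
  {F : Type*} [Field F] {s : ℕ} {lam : F}

theorem signlessLapEigenEq_halfEdgeLift (hs : 2 ≤ s) (v₀ : Fin s) {eps c : V → F}
    (heps : ∀ u, eps u ^ (2 * s) = 1)
    (h : ∀ u, c u ≠ 0 →
      (lam - G.degree u) * c u ^ s = eps u * ∑ w ∈ G.neighborFinset u, eps w * c w ^ s) :
    SignlessLapEigenEq G (2 * s) s lam (halfEdgeLift v₀ eps c) := by
  obtain ⟨n, rfl⟩ : ∃ n, s = n + 2 := ⟨s - 2, by omega⟩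
  intro u v
  rw [← Finset.mul_sum]
  simp only [prod_halfEdgeLift, Finset.mem_univ, if_true, Finset.card_univ, Fintype.card_fin,
    Finset.card_erase_of_mem, Finset.mem_erase, and_true,
    show 2 * (n + 2) - 1 = 2 * n + 3 by omega, show n + 2 - 1 = n + 1 by omega]
  by_cases hc : c u = 0
  · simp [halfEdgeLift, hc]
  have hu := h u hc
  by_cases hv : v = v₀
  · subst hv
    simp only [halfEdgeLift, if_true, ne_eq, not_true_eq_false, if_false, one_mul]
    linear_combination (eps u ^ (2 * n + 3) * c u ^ (n + 1)) * hu +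
      (c u ^ (n + 1) * ∑ w ∈ G.neighborFinset u, eps w * c w ^ (n + 2)) * heps u
  · simp only [halfEdgeLift, hv, if_false, one_mul, ne_eq, Ne.symm hv, not_false_eq_true,
      if_true]
    linear_combination c u ^ (n + 1) * hu

theorem isTwistedBlockEigenvalue_degree [DecidableEq V] (k : ℕ) (u : V) :
    IsTwistedBlockEigenvalue G k (G.degree u : F) := by
  have hu : u ∈ ({u} : Finset V) := Finset.mem_singleton_self u
  refine ⟨{u}, ⟨u, hu⟩, ?_, 1, fun _ => one_pow k, 1, one_ne_zero, ?_⟩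
  · rw [Finset.coe_singleton, SimpleGraph.induce_singleton_eq_top]
    exact SimpleGraph.connected_top
  · ext ⟨w, hw⟩
    obtain rfl := Finset.mem_singleton.mp hw
    simp [Matrix.mulVec, dotProduct, Subsingleton.elim default (⟨w, hw⟩ : ({w} : Finset V))]

theorem isTwistedBlockEigenvalue_of_ne_degree [DecidableEq V] (hs : 2 ≤ s) {x : V × Fin s → F}
    (hx0 : x ≠ 0) (hx : SignlessLapEigenEq G (2 * s) s lam x) (hlam : ∀ u, lam ≠ G.degree u) :
    IsTwistedBlockEigenvalue G (2 * s) lam := by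
  have h2s : 2 * s ≠ 0 := by omega
  set P : V → F := fun u => ∏ q, x (u, q) with hP
  obtain ⟨⟨u₀, v⟩, hxu₀⟩ := Function.ne_iff.mp hx0
  obtain ⟨U, hu₀U, hUP, hconn, hclosed⟩ := G.exists_finset_induce_connected_adj_closed
    (S := {u | P u ≠ 0}) (hx.prod_ne_zero (hlam u₀) hxu₀)
  let v₀ : Fin s := ⟨0, by omega⟩
  have hxU : ∀ u ∈ U, x (u, v₀) ≠ 0 := fun u hu =>
    Finset.prod_ne_zero_iff.mp (hUP hu) v₀ (Finset.mem_univ v₀)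
  let y : U → F := fun u => x (u.1, v₀) ^ s
  have hy : ∀ u, y u ≠ 0 := fun u => pow_ne_zero s (hxU u u.2)
  let eps : U → F := fun u => P u / y u
  have hPU : ∀ u : U, P u = eps u * y u := fun u => (div_mul_cancel₀ _ (hy u)).symm
  have hy0 : y ≠ 0 := fun h => hy ⟨u₀, hu₀U⟩ (congrFun h _)
  refine ⟨U, ⟨u₀, hu₀U⟩, hconn, eps, fun u => ?_, y, hy0, ?_⟩
  · have hPpow : P u ^ (2 * s) = y u ^ (2 * s) := by
      rw [hP, ← Finset.prod_pow,
        Finset.prod_congr rfl fun q _ => hx.pow_eq_pow h2s (hlam u) q v₀, Finset.prod_const,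
        Finset.card_univ, Fintype.card_fin, ← pow_mul, ← pow_mul, mul_comm]
    rw [div_pow, hPpow, div_self (pow_ne_zero _ (hy u))]
  · ext u
    rw [G.diagonal_add_conj_adjMatrix_mulVec_apply _ eps y P hPU u fun w huw hwU =>
      by_contra fun hPw => hwU (hclosed u u.2 w hPw huw), Pi.smul_apply, smul_eq_mul]
    have key := hx.mul_pow_eq h2s u v₀
    rw [two_mul, pow_add] at key
    change (lam - _) * (y u * y u) = P u * ∑ w ∈ _, P w at key
    rw [hPU u] at key
    refine mul_right_cancel₀ (hy u) ?_
    linear_combination -key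

theorem isTwistedBlockEigenvalue_of_signlessLapEigenEq [DecidableEq V] (hs : 2 ≤ s)
    {x : V × Fin s → F} (hx0 : x ≠ 0) (hx : SignlessLapEigenEq G (2 * s) s lam x) :
    IsTwistedBlockEigenvalue G (2 * s) lam := by
  by_cases hlam : ∃ u, lam = G.degree u
  · obtain ⟨u, rfl⟩ := hlam
    exact isTwistedBlockEigenvalue_degree (2 * s) u
  · exact isTwistedBlockEigenvalue_of_ne_degree hs hx0 hx (not_exists.mp hlam)

theorem exists_signlessLapEigenEq_of_twisted_block_eigenvector [DecidableEq V] (hs : 2 ≤ s)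
    {U : Finset V} {eps y c : U → F} (heps : ∀ u, eps u ^ (2 * s) = 1) (hy : y ≠ 0)
    (hc : ∀ u, c u ^ s = y u)
    (h : (diagonal (fun u : U => (G.degree u.1 : F)) +
      diagonal eps * (G.adjMatrix F).submatrix Subtype.val Subtype.val * diagonal eps) *ᵥ y =
        lam • y) :
    ∃ x : V × Fin s → F, x ≠ 0 ∧ SignlessLapEigenEq G (2 * s) s lam x := by
  let eps' : V → F := fun u => if hu : u ∈ U then eps ⟨u, hu⟩ else 1
  let c' : V → F := fun u => if hu : u ∈ U then c ⟨u, hu⟩ else 0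
  have heps' : ∀ u, eps' u ^ (2 * s) = 1 := fun u => by
    by_cases hu : u ∈ U <;> simp [eps', hu, heps]
  let v₀ : Fin s := ⟨0, by omega⟩
  refine ⟨halfEdgeLift v₀ eps' c', fun h0 => ?_,
    signlessLapEigenEq_halfEdgeLift hs v₀ heps' fun u hcu => ?_⟩
  · obtain ⟨u, hu⟩ := Function.ne_iff.mp hy
    have hcu : c u ≠ 0 := ne_zero_pow (n := s) (by omega) (by rwa [hc u])
    have hepsu : eps u ≠ 0 :=
      ne_zero_pow (n := 2 * s) (by omega) (by rw [heps u]; exact one_ne_zero)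
    have := congrFun h0 (u.1, v₀)
    simp [halfEdgeLift, eps', c', hcu, hepsu] at this
  · have hu : u ∈ U := by by_contra hu; simp [c', hu] at hcu
    have hu' := congrFun h ⟨u, hu⟩
    rw [G.diagonal_add_conj_adjMatrix_mulVec_apply _ eps y (fun w => eps' w * c' w ^ s)
      (fun w => by simp [eps', c', hc]) _ fun w _ hw => by simp [c', hw, show s ≠ 0 by omega],
      Pi.smul_apply, smul_eq_mul] at hu'
    simp only [eps', c', dif_pos hu, hc] at hu' ⊢
    linear_combination -hu'

end Correspondence

/-- The set of eigenvalues of the signless Laplacian tensor `Q(G^{k,k/2})` equals the union,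
over all nonempty `U ⊆ V` with `G[U]` connected and all diagonal matrices `E = diag(ε)` with
`k`-th-root-of-unity entries, of the sets of eigenvalues of `D_U + E·A_U·E`; and the set of
`H`-eigenvalues of `Q(G^{k,k/2})` equals the union, over all nonempty `U` with `G[U]`
connected, of the sets of eigenvalues of the real symmetric matrices `D_U + A_U`. -/
theorem stmt12 {V : Type*} [Fintype V] [DecidableEq V] (k s : ℕ)
    (hk : 4 ≤ k) (hks : k = 2 * s) (G : SimpleGraph V) [DecidableRel G.Adj] :
    ({lam : ℂ | ∃ x : V × Fin s → ℂ, IsSignlessLapEigenpair k s G lam x} =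
      {lam : ℂ | ∃ U : Finset V, U.Nonempty ∧ (G.induce (↑U : Set V)).Connected ∧
        ∃ eps : {u // u ∈ U} → ℂ, (∀ u, eps u ^ k = 1) ∧
          ∃ y : {u // u ∈ U} → ℂ, y ≠ 0 ∧
            (Matrix.diagonal (fun u : {u // u ∈ U} => (G.degree u.1 : ℂ)) +
                Matrix.diagonal eps * (G.adjMatrix ℂ).submatrix Subtype.val Subtype.val *
                  Matrix.diagonal eps) *ᵥ y = lam • y}) ∧
    ({lam : ℝ | ∃ x : V × Fin s → ℝ,
        IsSignlessLapEigenpair k s G (lam : ℂ) (fun v => (x v : ℂ))} =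
      {lam : ℝ | ∃ U : Finset V, U.Nonempty ∧ (G.induce (↑U : Set V)).Connected ∧
        ∃ y : {u // u ∈ U} → ℝ, y ≠ 0 ∧
          (Matrix.diagonal (fun u : {u // u ∈ U} => (G.degree u.1 : ℝ)) +
              (G.adjMatrix ℝ).submatrix Subtype.val Subtype.val) *ᵥ y = lam • y}) := by
  subst hks
  have hs : 2 ≤ s := by omega
  refine ⟨Set.ext fun lam => ⟨?_, ?_⟩, Set.ext fun lam => ⟨?_, ?_⟩⟩
  · rintro ⟨x, hx0, hx⟩
    exact isTwistedBlockEigenvalue_of_signlessLapEigenEq hs hx0 hx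
  · rintro ⟨U, -, -, eps, heps, y, hy, h⟩
    choose c hc using fun u => IsAlgClosed.exists_pow_nat_eq (y u) (by omega : 0 < s)
    exact exists_signlessLapEigenEq_of_twisted_block_eigenvector hs heps hy hc h
  · rintro ⟨x, hx⟩
    obtain ⟨hx0, hx⟩ := (isSignlessLapEigenpair_ofReal_iff G).mp hx
    obtain ⟨U, hU, hconn, eps, heps, y, hy, h⟩ :=
      isTwistedBlockEigenvalue_of_signlessLapEigenEq hs hx0 hx
    exact ⟨U, hU, hconn, exists_diagonal_add_mulVec_eq_smul_of_conj (by omega) heps hy h⟩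
  · rintro ⟨U, -, -, y, hy, h⟩
    obtain ⟨eps, hee, habs⟩ := exists_diagonal_add_conj_mulVec_abs_eq_smul h
    obtain ⟨x, hx⟩ := exists_signlessLapEigenEq_of_twisted_block_eigenvector hs
      (c := fun u => |y u| ^ (s⁻¹ : ℝ)) (fun u => by rw [pow_mul, sq, hee, one_pow])
      (fun h0 => hy (funext fun u => abs_eq_zero.mp (congrFun h0 u)))
      (fun u => Real.rpow_inv_natCast_pow (abs_nonneg _) (by omega)) habs
    exact ⟨x, (isSignlessLapEigenpair_ofReal_iff G).mpr hx⟩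
end

section
/- Let G be any finite simple graph and suppose k ≡ 0 (mod 4). Define γ on V × {1,…,s} by γ_{(u,1)} = i (the imaginary unit) and γ_{(u,j)} = 1 for 2 ≤ j ≤ s. Then, entrywise for all index tuples (v₁,…,v_k) from V × {1,…,s}: L_{v₁…v_k} = γ_{v₁}^{−(k−1)}·Q_{v₁…v_k}·γ_{v₂}⋯γ_{v_k} and −A_{v₁…v_k} = γ_{v₁}^{−(k−1)}·A_{v₁…v_k}·γ_{v₂}⋯γ_{v_k}, where A, L, Q are the adjacency, Laplacian and signless Laplacian tensors of G^{k,k/2}. Consequently, a complex number λ is an eigenvalue of A(G^{k,k/2}) if and only if −λ is an eigenvalue of A(G^{k,k/2}). -/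
open scoped BigOperators

attribute [local instance] Classical.propDecidable

/-- Entry of the adjacency tensor of the generalized power hypergraph `G^{k,k/2}` at the index
tuple `t = (v₁,…,v_k)`: it is `1/(k−1)!` when the `v_i` are pairwise distinct and
`{v₁,…,v_k}` is an edge `({u} ∪ {w}) × {1,…,s}` for some edge `{u,w}` of `G`, and `0`
otherwise. -/
noncomputable def adjEntry {V : Type*} (k s : ℕ) (G : SimpleGraph V)
    (t : Fin k → V × Fin s) : ℂ :=
  if Function.Injective t ∧ ∃ u w : V, G.Adj u w ∧
      Set.range t = {p : V × Fin s | p.1 = u ∨ p.1 = w} then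
    ((Nat.factorial (k - 1) : ℂ))⁻¹
  else 0

/-- Entry of the degree diagonal tensor of `G^{k,k/2}` at the index tuple `t`: it is
`deg_G u` when all components of `t` are equal to one common vertex of the half edge of `u`,
and `0` otherwise. -/
noncomputable def diagEntry {V : Type*} [Fintype V] [DecidableEq V] (k s : ℕ)
    (G : SimpleGraph V) [DecidableRel G.Adj] (t : Fin k → V × Fin s) : ℂ :=
  if h : ∃ p : V × Fin s, ∀ i, t i = p then (G.degree h.choose.1 : ℂ) else 0

/-- `lam` is an eigenvalue of the adjacency tensor of `G^{k,k/2}`: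
`λ·x_v^{k−1} = Σ_{(v₂,…,v_k)} A_{v v₂ … v_k}·x_{v₂}⋯x_{v_k}` for some `x ≠ 0`. -/
noncomputable def IsAdjTensorEigenvalue {V : Type*} [Fintype V] [DecidableEq V] (k s : ℕ)
    (G : SimpleGraph V) [DecidableRel G.Adj] (lam : ℂ) : Prop :=
  ∃ x : V × Fin s → ℂ, x ≠ 0 ∧ ∀ v : V × Fin s,
    lam * x v ^ (k - 1) =
      ∑ tt : Fin (k - 1) → V × Fin s,
        adjEntry ((k - 1) + 1) s G (Fin.cons v tt) * ∏ i : Fin (k - 1), x (tt i)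

section Aux
variable {V : Type*}

lemma gamma_ne (gamma : V × Fin s → ℂ)
    (hgamma : ∀ (u : V) (j : Fin s), gamma (u, j) = if (j : ℕ) = 0 then Complex.I else 1)
    (p : V × Fin s) : gamma p ≠ 0 := by
  have := hgamma p.1 p.2
  rw [show (p.1, p.2) = p from rfl] at this
  rw [this]
  split_ifs <;> simp [Complex.I_ne_zero]

lemma gamma_pow (gamma : V × Fin s → ℂ)
    (hgamma : ∀ (u : V) (j : Fin s), gamma (u, j) = if (j : ℕ) = 0 then Complex.I else 1)
    (p : V × Fin s) {m : ℕ} (hm : 4 ∣ m) : gamma p ^ m = 1 := by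
  obtain ⟨c, rfl⟩ := hm
  have h4 : gamma p ^ 4 = 1 := by
    have := hgamma p.1 p.2
    rw [show (p.1, p.2) = p from rfl] at this
    rw [this]
    split_ifs <;> simp [pow_succ, Complex.I_mul_I]
  rw [pow_mul, h4, one_pow]

lemma prod_gamma_edge [Fintype V] {s : ℕ} (hs : 0 < s) (gamma : V × Fin s → ℂ)
    (hgamma : ∀ (u : V) (j : Fin s), gamma (u, j) = if (j : ℕ) = 0 then Complex.I else 1)
    {u w : V} (huw : u ≠ w) {n : ℕ} (t : Fin n → V × Fin s)
    (hinj : Function.Injective t)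
    (hr : Set.range t = {p : V × Fin s | p.1 = u ∨ p.1 = w}) :
    ∏ i, gamma (t i) = -1 := by
  classical
  have himg : Finset.image t Finset.univ
      = (({u, w} : Finset V) ×ˢ (Finset.univ : Finset (Fin s))) := by
    apply Finset.coe_injective
    rw [Finset.coe_image, Finset.coe_univ, Set.image_univ, hr]
    ext p
    simp [Finset.mem_product]
  have hcol : ∀ v : V, ∏ j : Fin s, gamma (v, j) = Complex.I := by
    intro v
    rw [Finset.prod_eq_single (⟨0, hs⟩ : Fin s)]
    · rw [hgamma]; simp
    · intro b _ hb
      rw [hgamma]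
      rw [if_neg]
      intro hb0
      exact hb (Fin.ext hb0)
    · intro h; exact absurd (Finset.mem_univ _) h
  calc ∏ i, gamma (t i)
      = ∏ p ∈ Finset.image t Finset.univ, gamma p :=
        (Finset.prod_image (fun i _ j _ h => hinj h)).symm
    _ = ∏ p ∈ (({u, w} : Finset V) ×ˢ (Finset.univ : Finset (Fin s))), gamma p := by
        rw [himg]
    _ = ∏ v ∈ ({u, w} : Finset V), ∏ j : Fin s, gamma (v, j) := by
        rw [Finset.prod_product]
    _ = Complex.I * Complex.I := by
        rw [Finset.prod_congr rfl (fun v _ => hcol v), Finset.prod_pair huw]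
    _ = -1 := Complex.I_mul_I

lemma adj_identity [Fintype V] {n s : ℕ} (hs : 0 < s) (hn4 : 4 ∣ n) (hn : 1 ≤ n)
    (G : SimpleGraph V) (gamma : V × Fin s → ℂ)
    (hgamma : ∀ (u : V) (j : Fin s), gamma (u, j) = if (j : ℕ) = 0 then Complex.I else 1)
    (t : Fin n → V × Fin s) (z : Fin n) :
    -(adjEntry n s G t) =
      (gamma (t z))⁻¹ ^ (n - 1) *
        (adjEntry n s G t * ∏ i ∈ Finset.univ.erase z, gamma (t i)) := by
  classical
  unfold adjEntry
  by_cases hA : Function.Injective t ∧ ∃ u w : V, G.Adj u w ∧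
      Set.range t = {p : V × Fin s | p.1 = u ∨ p.1 = w}
  · rw [if_pos hA]
    obtain ⟨hinj, u, w, huw, hr⟩ := hA
    have hprod : ∏ i, gamma (t i) = -1 :=
      prod_gamma_edge hs gamma hgamma huw.ne t hinj hr
    have hγ : gamma (t z) ≠ 0 := gamma_ne gamma hgamma _
    have hmul : gamma (t z) * ∏ i ∈ Finset.univ.erase z, gamma (t i) = -1 := by
      rw [Finset.mul_prod_erase Finset.univ (fun i => gamma (t i)) (Finset.mem_univ z), hprod]
    have hP : ∏ i ∈ Finset.univ.erase z, gamma (t i) = (gamma (t z))⁻¹ * (-1) := by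
      rw [← hmul, ← mul_assoc, inv_mul_cancel₀ hγ, one_mul]
    rw [hP]
    have h1 : (gamma (t z))⁻¹ ^ (n - 1) * (gamma (t z))⁻¹ = 1 := by
      rw [← pow_succ, show n - 1 + 1 = n from by omega, inv_pow,
        gamma_pow gamma hgamma _ hn4, inv_one]
    set c : ℂ := ((Nat.factorial (n - 1) : ℂ))⁻¹
    linear_combination c * h1
  · rw [if_neg hA]; ring

lemma lap_identity [Fintype V] [DecidableEq V] {n s : ℕ} (hs : 0 < s) (hn4 : 4 ∣ n)
    (hn : 2 ≤ n) (G : SimpleGraph V) [DecidableRel G.Adj] (gamma : V × Fin s → ℂ)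
    (hgamma : ∀ (u : V) (j : Fin s), gamma (u, j) = if (j : ℕ) = 0 then Complex.I else 1)
    (t : Fin n → V × Fin s) (z : Fin n) :
    diagEntry n s G t - adjEntry n s G t =
      (gamma (t z))⁻¹ ^ (n - 1) *
        ((diagEntry n s G t + adjEntry n s G t) *
          ∏ i ∈ Finset.univ.erase z, gamma (t i)) := by
  classical
  by_cases hD : ∃ p : V × Fin s, ∀ i, t i = p
  · have hAz : adjEntry n s G t = 0 := by
      unfold adjEntry
      rw [if_neg]
      rintro ⟨hinj, -⟩
      obtain ⟨p, hp⟩ := hD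
      have h01 : (⟨0, by omega⟩ : Fin n) = ⟨1, by omega⟩ := hinj (by rw [hp, hp])
      simp [Fin.ext_iff] at h01
    have hDval : diagEntry n s G t = (G.degree hD.choose.1 : ℂ) := by
      unfold diagEntry; rw [dif_pos hD]
    have hγ : gamma hD.choose ≠ 0 := gamma_ne gamma hgamma _
    have htz : ∀ i, t i = hD.choose := hD.choose_spec
    have hP : ∏ i ∈ Finset.univ.erase z, gamma (t i) = gamma hD.choose ^ (n - 1) := by
      rw [Finset.prod_congr rfl (fun i _ => by rw [htz i]), Finset.prod_const,
        Finset.card_erase_of_mem (Finset.mem_univ z), Finset.card_univ, Fintype.card_fin]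
    rw [hAz, hDval, hP, htz z]
    rw [sub_zero, add_zero, mul_comm ((gamma hD.choose)⁻¹ ^ (n-1)), mul_assoc,
      ← mul_pow, mul_inv_cancel₀ hγ, one_pow, mul_one]
  · have hDval : diagEntry n s G t = 0 := by unfold diagEntry; rw [dif_neg hD]
    rw [hDval, zero_sub, zero_add]
    exact adj_identity hs hn4 (by omega) G gamma hgamma t z

lemma eig_neg [Fintype V] [DecidableEq V] {k s : ℕ} (hk : 4 ≤ k) (hks : k = 2 * s)
    (hk4 : 4 ∣ k) (G : SimpleGraph V) [DecidableRel G.Adj] (gamma : V × Fin s → ℂ)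
    (hgamma : ∀ (u : V) (j : Fin s), gamma (u, j) = if (j : ℕ) = 0 then Complex.I else 1)
    {lam : ℂ} (h : IsAdjTensorEigenvalue k s G lam) :
    IsAdjTensorEigenvalue k s G (-lam) := by
  classical
  obtain ⟨x, hx0, hx⟩ := h
  have hs : 0 < s := by omega
  have hn4 : 4 ∣ (k - 1) + 1 := by
    have : (k - 1) + 1 = k := by omega
    rw [this]; exact hk4
  refine ⟨fun p => gamma p * x p, ?_, ?_⟩
  · obtain ⟨p, hp⟩ := Function.ne_iff.mp hx0
    intro h0
    exact mul_ne_zero (gamma_ne gamma hgamma p) hp (congrFun h0 p)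
  · intro v
    have key : ∀ tt : Fin (k - 1) → V × Fin s,
        adjEntry ((k - 1) + 1) s G (Fin.cons v tt) * ∏ i : Fin (k - 1), gamma (tt i)
          = -(gamma v ^ (k - 1)) * adjEntry ((k - 1) + 1) s G (Fin.cons v tt) := by
      intro tt
      have hγv : gamma v ≠ 0 := gamma_ne gamma hgamma v
      have hid := adj_identity hs hn4 (by omega) G gamma hgamma (Fin.cons v tt)
        (0 : Fin ((k - 1) + 1))
      have hP : ∏ i ∈ Finset.univ.erase (0 : Fin ((k - 1) + 1)),
            gamma ((Fin.cons v tt : Fin ((k-1)+1) → V × Fin s) i)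
          = ∏ i : Fin (k - 1), gamma (tt i) := by
        apply mul_left_cancel₀ hγv
        rw [show gamma v
          = gamma ((Fin.cons v tt : Fin ((k-1)+1) → V × Fin s) 0) from rfl]
        rw [Finset.mul_prod_erase Finset.univ
          (fun i => gamma ((Fin.cons v tt : Fin ((k-1)+1) → V × Fin s) i))
          (Finset.mem_univ (0 : Fin ((k - 1) + 1)))]
        rw [Fin.prod_univ_succ]
        simp [Fin.cons_succ]
      rw [hP] at hid
      have hcz : (Fin.cons v tt : Fin ((k-1)+1) → V × Fin s) (0 : Fin ((k - 1) + 1)) = v := rfl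
      rw [hcz] at hid
      have hone : gamma v ^ ((k-1)+1-1) * (gamma v)⁻¹ ^ ((k-1)+1-1) = 1 := by
        rw [← mul_pow, mul_inv_cancel₀ hγv, one_pow]
      calc adjEntry ((k - 1) + 1) s G (Fin.cons v tt) * ∏ i : Fin (k - 1), gamma (tt i)
          = gamma v ^ ((k-1)+1-1) * ((gamma v)⁻¹ ^ ((k-1)+1-1) *
              (adjEntry ((k - 1) + 1) s G (Fin.cons v tt)
                * ∏ i : Fin (k - 1), gamma (tt i))) := by
            rw [← mul_assoc, hone, one_mul]
        _ = gamma v ^ ((k-1)+1-1) * (-(adjEntry ((k - 1) + 1) s G (Fin.cons v tt))) := by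
            rw [← hid]
        _ = -(gamma v ^ (k - 1)) * adjEntry ((k - 1) + 1) s G (Fin.cons v tt) := by
            rw [Nat.add_sub_cancel]; ring
    calc -lam * (gamma v * x v) ^ (k - 1)
        = -(gamma v ^ (k - 1)) * (lam * x v ^ (k - 1)) := by ring
      _ = -(gamma v ^ (k - 1)) * ∑ tt : Fin (k - 1) → V × Fin s,
            adjEntry ((k - 1) + 1) s G (Fin.cons v tt) * ∏ i : Fin (k - 1), x (tt i) := by
          rw [hx v]
      _ = ∑ tt : Fin (k - 1) → V × Fin s,
            adjEntry ((k - 1) + 1) s G (Fin.cons v tt)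
              * ∏ i : Fin (k - 1), (gamma (tt i) * x (tt i)) := by
          rw [Finset.mul_sum]
          refine Finset.sum_congr rfl (fun tt _ => ?_)
          rw [Finset.prod_mul_distrib]
          linear_combination (-(∏ i : Fin (k - 1), x (tt i))) * key tt

end Aux

/-- If `4 ∣ k` and `γ` is the diagonal weighting with `γ_{(u,1)} = i` and `γ_{(u,j)} = 1`
otherwise, then entrywise `L = γ₁^{−(k−1)}·Q·γ₂⋯γ_k` and `−A = γ₁^{−(k−1)}·A·γ₂⋯γ_k` for the
adjacency, Laplacian and signless Laplacian tensors of `G^{k,k/2}`; consequently the spectrum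
of the adjacency tensor is symmetric with respect to the origin. -/
theorem stmt14 {V : Type*} [Fintype V] [DecidableEq V] (k s : ℕ)
    (hk : 4 ≤ k) (hks : k = 2 * s) (hk4 : 4 ∣ k)
    (G : SimpleGraph V) [DecidableRel G.Adj]
    (gamma : V × Fin s → ℂ)
    (hgamma : ∀ (u : V) (j : Fin s),
      gamma (u, j) = if (j : ℕ) = 0 then Complex.I else 1) :
    (∀ t : Fin k → V × Fin s,
      diagEntry k s G t - adjEntry k s G t =
        (gamma (t ⟨0, by omega⟩))⁻¹ ^ (k - 1) *
          ((diagEntry k s G t + adjEntry k s G t) *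
            ∏ i ∈ Finset.univ.erase (⟨0, by omega⟩ : Fin k), gamma (t i))) ∧
    (∀ t : Fin k → V × Fin s,
      -(adjEntry k s G t) =
        (gamma (t ⟨0, by omega⟩))⁻¹ ^ (k - 1) *
          (adjEntry k s G t *
            ∏ i ∈ Finset.univ.erase (⟨0, by omega⟩ : Fin k), gamma (t i))) ∧
    (∀ lam : ℂ, IsAdjTensorEigenvalue k s G lam ↔ IsAdjTensorEigenvalue k s G (-lam)) := by
  have hs : 0 < s := by omega
  refine ⟨fun t => lap_identity hs hk4 (by omega) G gamma hgamma t _,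
    fun t => adj_identity hs hk4 (by omega) G gamma hgamma t _,
    fun lam => ⟨fun h => eig_neg hk hks hk4 G gamma hgamma h,
      fun h => by have := eig_neg hk hks hk4 G gamma hgamma h; rwa [neg_neg] at this⟩⟩
end

section
/- Let k be even and let H be a connected k-uniform hypergraph with at least one edge that is not odd-bipartite. Then the following are equivalent: (1) ρ^L(H) = ρ^Q(H); (2) there exists γ : W → ℂ with |γ_w| = 1 for all w such that L(H) is obtained from Q(H) by the diagonal similarity γ; (3) the set of eigenvalues of L(H) equals the set of eigenvalues of Q(H); (4) there exists γ : W → ℂ with |γ_w| = 1 for all w such that −A(H) is obtained from A(H) by the diagonal similarity γ; (5) the set of eigenvalues of A(H) is symmetric with respect to the origin, i.e., λ is an eigenvalue of A(H) if and only if −λ is; (6) −ρ^A(H) is an eigenvalue of A(H). -/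
open scoped BigOperators

attribute [local instance] Classical.propDecidable

/-- The degree of a vertex `w` in the hypergraph with edge set `E`. -/
def hypDegree {W : Type*} [DecidableEq W] (E : Finset (Finset W)) (w : W) : ℕ :=
  (E.filter fun e => w ∈ e).card

/-- `lam` is an eigenvalue of the adjacency tensor `A(H)` of the `k`-uniform hypergraph with
edge set `E`. -/
def IsAdjEig {W : Type*} [Fintype W] [DecidableEq W] (k : ℕ)
    (E : Finset (Finset W)) (lam : ℂ) : Prop :=
  ∃ x : W → ℂ, x ≠ 0 ∧ ∀ w : W,
    lam * x w ^ (k - 1) = ∑ e ∈ E.filter (fun e => w ∈ e), ∏ p ∈ e.erase w, x p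

/-- `lam` is an eigenvalue of the Laplacian tensor `L(H)`. -/
def IsLapEig {W : Type*} [Fintype W] [DecidableEq W] (k : ℕ)
    (E : Finset (Finset W)) (lam : ℂ) : Prop :=
  ∃ x : W → ℂ, x ≠ 0 ∧ ∀ w : W,
    ((hypDegree E w : ℂ) - lam) * x w ^ (k - 1) =
      ∑ e ∈ E.filter (fun e => w ∈ e), ∏ p ∈ e.erase w, x p

/-- `lam` is an eigenvalue of the signless Laplacian tensor `Q(H)`. -/
def IsSignlessEig {W : Type*} [Fintype W] [DecidableEq W] (k : ℕ)
    (E : Finset (Finset W)) (lam : ℂ) : Prop :=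
  ∃ x : W → ℂ, x ≠ 0 ∧ ∀ w : W,
    (lam - (hypDegree E w : ℂ)) * x w ^ (k - 1) =
      ∑ e ∈ E.filter (fun e => w ∈ e), ∏ p ∈ e.erase w, x p

/-- Entry of the adjacency tensor of the hypergraph with edge set `E` at the tuple `t`. -/
noncomputable def adjEnt {W : Type*} [Fintype W] [DecidableEq W] (k : ℕ)
    (E : Finset (Finset W)) (t : Fin k → W) : ℂ :=
  if Function.Injective t ∧ Finset.image t Finset.univ ∈ E then
    ((Nat.factorial (k - 1) : ℂ))⁻¹
  else 0

/-- Entry of the degree diagonal tensor of the hypergraph with edge set `E` at the tuple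
`t`. -/
noncomputable def diagEnt {W : Type*} [Fintype W] [DecidableEq W] (k : ℕ)
    (E : Finset (Finset W)) (t : Fin k → W) : ℂ :=
  if h : ∃ w : W, ∀ i, t i = w then (hypDegree E h.choose : ℂ) else 0

/-!
For weights `c ≥ 0` the form `φ_c(z) = ∑_w c_w z_w ^ k + k ∑_{e ∈ E} ∏_{p ∈ e} z_p` attains its
maximum `ρ_c` on the nonnegative part of the unit `ℓᵏ`-sphere. Connectivity forces every
nonnegative maximiser to be strictly positive, and the Lagrange condition turns a positive
maximiser into an eigenvector of `x ↦ c x^[k-1] + A x`. Conversely every eigenvalue of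
`x ↦ c x^[k-1] ± A x` has modulus at most `ρ_c`, because `|x|` then satisfies
`|μ| ∑ |x_w| ^ k ≤ φ_c(|x|)`. Hence `ρ^A = ρ_0` and `ρ^Q = ρ_d`, where `d` is the degree vector.

If `-ρ_0` is an eigenvalue of `A`, or some eigenvalue of `L` has modulus `ρ_d`, then `|x|` is a
maximiser: it is positive and every triangle inequality above is an equality. So each term
`-∏_{p ∈ e \ w} x_p` points in the direction of `x_w ^ (k-1)`, which says that `γ = x / |x|`
satisfies `∏_{p ∈ e \ w} γ_p = -γ_w ^ (k-1)` on every edge. This edge condition is the statement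
that the diagonal similarity by `γ` sends `A` to `-A` (equivalently `Q` to `L`), and `x ↦ γ x` then
carries eigenvectors of `A` to those of `-A` and eigenvectors of `L` to those of `Q`. Finally, the
Laplacian spectrum is closed and bounded, so `ρ^L = ρ^Q` is attained by an eigenvalue of `L`.
-/

open Finset Filter Topology

section NormedFacts

lemma sameRay_of_norm_add_norm_sub_le {V : Type*} [NormedAddCommGroup V] [NormedSpace ℝ V]
    [StrictConvexSpace ℝ V] {u v : V} (h : ‖u‖ + ‖v - u‖ ≤ ‖v‖) : SameRay ℝ u v := by
  have := sameRay_iff_norm_add.2 (le_antisymm (norm_add_le u (v - u)) (by simpa using h))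
  simpa using this.add_right SameRay.rfl

lemma sameRay_add_sum_of_norm_le {V ι : Type*} [NormedAddCommGroup V] [NormedSpace ℝ V]
    [StrictConvexSpace ℝ V] {a : V} {s : Finset ι} {f : ι → V}
    (h : ‖a‖ + ∑ i ∈ s, ‖f i‖ ≤ ‖a + ∑ i ∈ s, f i‖) :
    SameRay ℝ a (a + ∑ i ∈ s, f i) ∧ ∀ i ∈ s, SameRay ℝ (f i) (a + ∑ i ∈ s, f i) := by
  classical
  refine ⟨sameRay_of_norm_add_norm_sub_le ?_, fun i hi => sameRay_of_norm_add_norm_sub_le ?_⟩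
  · rw [add_sub_cancel_left]
    exact (add_le_add_right (norm_sum_le s f) ‖a‖).trans h
  · rw [← add_sum_erase s f hi, ← add_sum_erase s (fun j => ‖f j‖) hi] at h
    rw [← add_sum_erase s f hi]
    calc ‖f i‖ + ‖a + (f i + ∑ j ∈ s.erase i, f j) - f i‖
        = ‖f i‖ + ‖a + ∑ j ∈ s.erase i, f j‖ := by congr 2; abel
      _ ≤ ‖f i‖ + (‖a‖ + ∑ j ∈ s.erase i, ‖f j‖) := by
          gcongr
          exact (norm_add_le _ _).trans (add_le_add_right (norm_sum_le _ _) _)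
      _ ≤ _ := by linarith

lemma csSup_norm_eq {P : ℂ → Prop} {μ : ℂ} (hμ : P μ) {ρ : ℝ} (hμρ : ‖μ‖ = ρ)
    (hle : ∀ ν, P ν → ‖ν‖ ≤ ρ) : sSup {r : ℝ | ∃ ν, P ν ∧ r = ‖ν‖} = ρ :=
  IsGreatest.csSup_eq ⟨⟨μ, hμ, hμρ.symm⟩, by rintro _ ⟨ν, hν, rfl⟩; exact hle ν hν⟩

lemma exists_norm_eq_csSup {P : ℂ → Prop} (hP : IsClosed {μ | P μ}) {ρ : ℝ}
    (hle : ∀ μ, P μ → ‖μ‖ ≤ ρ) (hpos : 0 < sSup {r : ℝ | ∃ μ, P μ ∧ r = ‖μ‖}) :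
    ∃ μ, P μ ∧ ‖μ‖ = sSup {r : ℝ | ∃ μ, P μ ∧ r = ‖μ‖} := by
  have hS : {r : ℝ | ∃ μ, P μ ∧ r = ‖μ‖} = norm '' {μ | P μ} := by
    ext r
    simp [eq_comm]
  have hcpt : IsCompact {μ | P μ} := Metric.isCompact_of_isClosed_isBounded hP
    ((Metric.isBounded_closedBall (x := (0 : ℂ)) (r := ρ)).subset fun μ hμ => by
      simpa using hle μ hμ)
  have hne : {r : ℝ | ∃ μ, P μ ∧ r = ‖μ‖}.Nonempty := by
    by_contra h
    rw [Set.not_nonempty_iff_eq_empty.1 h, Real.sSup_empty] at hpos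
    exact lt_irrefl 0 hpos
  rw [hS] at hne ⊢
  obtain ⟨μ, hμ, hμS⟩ := (hcpt.image continuous_norm).sSup_mem hne
  exact ⟨μ, hμ, hμS⟩

end NormedFacts

section PowEigenvalue

variable {W : Type*}

def IsPowEigenvalue (m : ℕ) (F : (W → ℂ) → W → ℂ) (μ : ℂ) : Prop :=
  ∃ x : W → ℂ, x ≠ 0 ∧ ∀ w, μ * x w ^ m = F x w

lemma IsPowEigenvalue.of_conj {m : ℕ} {F G : (W → ℂ) → W → ℂ} {γ : W → ℂ} (hγ : ∀ w, γ w ≠ 0)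
    (hFG : ∀ x w, F (γ * x) w = γ w ^ m * G x w) {μ : ℂ} (h : IsPowEigenvalue m G μ) :
    IsPowEigenvalue m F μ := by
  obtain ⟨x, hx, hμ⟩ := h
  refine ⟨γ * x, fun h0 => hx (funext fun w => ?_), fun w => ?_⟩
  · simpa [hγ w] using congrFun h0 w
  · rw [hFG, ← hμ, Pi.mul_apply, mul_pow]
    ring

variable [Fintype W]

theorem isClosed_setOf_isPowEigenvalue {m : ℕ} {F : (W → ℂ) → W → ℂ} (hF : Continuous F)
    (hhom : ∀ (a : ℂ) x, F (a • x) = a ^ m • F x) : IsClosed {μ | IsPowEigenvalue m F μ} := by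
  have : CompactSpace (Metric.sphere (0 : W → ℂ) 1) :=
    isCompact_iff_compactSpace.1 (isCompact_sphere 0 1)
  -- Eigenvectors may be normalised, so the spectrum is a projection along a compact factor.
  have hproj : {μ | IsPowEigenvalue m F μ} = Prod.fst ''
      {p : ℂ × Metric.sphere (0 : W → ℂ) 1 | ∀ w, p.1 * (p.2 : W → ℂ) w ^ m = F p.2 w} := by
    ext μ
    constructor
    · rintro ⟨x, hx, hμ⟩
      refine ⟨(μ, ⟨((‖x‖⁻¹ : ℝ) : ℂ) • x, by simp [norm_smul, hx]⟩), fun w => ?_, rfl⟩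
      simp only [hhom, Pi.smul_apply, smul_eq_mul, mul_pow, ← hμ w]
      ring
    · rintro ⟨⟨μ, x, hx⟩, hμ, rfl⟩
      exact ⟨x, ne_zero_of_mem_unit_sphere ⟨x, hx⟩, hμ⟩
  rw [hproj]
  refine isClosedMap_fst_of_compactSpace _ ?_
  have hv : Continuous fun p : ℂ × Metric.sphere (0 : W → ℂ) 1 => (p.2 : W → ℂ) :=
    continuous_subtype_val.comp continuous_snd
  simp only [Set.ofPred_forall]
  exact isClosed_iInter fun w => isClosed_eq
    (continuous_fst.mul (((continuous_apply w).comp hv).pow m))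
    ((continuous_apply w).comp (hF.comp hv))

end PowEigenvalue

section Forms

variable {W : Type*} {k : ℕ} {E : Finset (Finset W)}

def edgeForm {R : Type*} [CommSemiring R] (E : Finset (Finset W)) (x : W → R) : R :=
  ∑ e ∈ E, ∏ p ∈ e, x p

lemma edgeForm_smul {R : Type*} [CommSemiring R] (hunif : ∀ e ∈ E, e.card = k) (a : R)
    (x : W → R) : edgeForm E (a • x) = a ^ k * edgeForm E x := by
  rw [edgeForm, edgeForm, mul_sum]
  refine sum_congr rfl fun e he => ?_
  simp only [Pi.smul_apply, smul_eq_mul, prod_mul_distrib, prod_const, hunif e he]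

lemma exists_mem_edge_of_reflTransGen {P : W → Prop} {a b : W}
    (h : Relation.ReflTransGen (fun p q => ∃ e ∈ E, p ∈ e ∧ q ∈ e) a b) (ha : P a) (hb : ¬ P b) :
    ∃ e ∈ E, (∃ p ∈ e, P p) ∧ ∃ q ∈ e, ¬ P q := by
  induction h with
  | refl => exact absurd ha hb
  | @tail c d _ hcd ih =>
    obtain ⟨e, he, hc, hd⟩ := hcd
    by_cases hPc : P c
    · exact ⟨e, he, ⟨c, hc, hPc⟩, d, hd, hb⟩
    · exact ih hPc

section

variable [Fintype W]

def weightedForm (k : ℕ) (E : Finset (Finset W)) (c z : W → ℝ) : ℝ :=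
  ∑ w, c w * z w ^ k + k * edgeForm E z

def IsFormBound (k : ℕ) (E : Finset (Finset W)) (c : W → ℝ) (ρ : ℝ) : Prop :=
  ∀ y : W → ℝ, 0 ≤ y → weightedForm k E c y ≤ ρ * ∑ w, y w ^ k

lemma weightedForm_smul (hunif : ∀ e ∈ E, e.card = k) (c : W → ℝ) (a : ℝ) (z : W → ℝ) :
    weightedForm k E c (a • z) = a ^ k * weightedForm k E c z := by
  simp only [weightedForm, edgeForm_smul hunif, Pi.smul_apply, smul_eq_mul, mul_pow, mul_add,
    mul_sum]
  congr 1
  · exact sum_congr rfl fun w _ => by ring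
  · ring

lemma weightedForm_add_le {c y y' : W → ℝ} (hc : 0 ≤ c) (hy : 0 ≤ y) (hle : y ≤ y')
    {e : Finset W} (he : e ∈ E) :
    weightedForm k E c y + k * (∏ p ∈ e, y' p - ∏ p ∈ e, y p) ≤ weightedForm k E c y' := by
  have hmono : ∀ e, ∏ p ∈ e, y p ≤ ∏ p ∈ e, y' p := fun e =>
    prod_le_prod (fun p _ => hy p) fun p _ => hle p
  have hc : ∑ w, c w * y w ^ k ≤ ∑ w, c w * y' w ^ k := sum_le_sum fun w _ =>
    mul_le_mul_of_nonneg_left (pow_le_pow_left₀ (hy w) (hle w) k) (hc w)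
  have hE : ∏ p ∈ e, y' p - ∏ p ∈ e, y p ≤ edgeForm E y' - edgeForm E y := by
    rw [edgeForm, edgeForm, ← sum_sub_distrib]
    exact single_le_sum (f := fun e => ∏ p ∈ e, y' p - ∏ p ∈ e, y p)
      (fun e _ => sub_nonneg.2 (hmono e)) he
  have := mul_le_mul_of_nonneg_left hE (Nat.cast_nonneg (α := ℝ) k)
  simp only [weightedForm]
  linarith

lemma sum_pow_pos {y : W → ℝ} (hy : 0 ≤ y) (hy0 : y ≠ 0) : 0 < ∑ w, y w ^ k := by
  obtain ⟨w, hw⟩ := Function.ne_iff.mp hy0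
  exact sum_pos' (fun v _ => pow_nonneg (hy v) k)
    ⟨w, mem_univ w, pow_pos (lt_of_le_of_ne (hy w) (Ne.symm hw)) k⟩

lemma IsFormBound.pos {c : W → ℝ} {ρ : ℝ} (hbd : IsFormBound k E c ρ) (hk : k ≠ 0)
    (hE : E.Nonempty) (hc : 0 ≤ c) : 0 < ρ := by
  have h := hbd 1 zero_le_one
  simp only [weightedForm, edgeForm, Pi.one_apply, one_pow, mul_one, prod_const_one, sum_const,
    nsmul_eq_mul, card_univ] at h
  have hEk : 0 < (k : ℝ) * #E := by have := hE.card_pos; positivity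
  have hc' : 0 ≤ ∑ w, c w := sum_nonneg fun w _ => hc w
  exact pos_of_mul_pos_left (by linarith) (Nat.cast_nonneg _)

lemma exists_isFormBound (hk : k ≠ 0) (hunif : ∀ e ∈ E, e.card = k) [Nonempty W]
    (c : W → ℝ) : ∃ ρ, IsFormBound k E c ρ ∧
      ∃ z : W → ℝ, 0 ≤ z ∧ ∑ w, z w ^ k = 1 ∧ weightedForm k E c z = ρ := by
  set K : Set (W → ℝ) := {z | 0 ≤ z ∧ ∑ w, z w ^ k = 1}
  have hK : IsCompact K := by
    refine (isCompact_univ_pi fun _ => isCompact_Icc (a := (0 : ℝ)) (b := 1)).of_isClosed_subset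
      ((isClosed_le continuous_const continuous_id).inter
        (isClosed_eq (by fun_prop) continuous_const)) ?_
    rintro z ⟨hz0, hz1⟩ w -
    refine ⟨hz0 w, (pow_le_one_iff_of_nonneg (hz0 w) hk).mp ?_⟩
    rw [← hz1]
    exact single_le_sum (f := fun v => z v ^ k) (fun v _ => pow_nonneg (hz0 v) k) (mem_univ w)
  obtain ⟨w₀⟩ := ‹Nonempty W›
  have hsingle : Pi.single w₀ 1 ∈ K := ⟨Pi.single_nonneg.2 zero_le_one, by
    simp [Pi.single_apply, zero_pow hk]⟩
  obtain ⟨z, ⟨hz0, hz1⟩, hmax⟩ := hK.exists_isMaxOn ⟨_, hsingle⟩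
    (by unfold weightedForm edgeForm; fun_prop : Continuous (weightedForm k E c)).continuousOn
  refine ⟨_, fun y hy => ?_, z, hz0, hz1, rfl⟩
  rcases eq_or_ne y 0 with rfl | hy0
  · simpa [zero_pow hk] using (weightedForm_smul hunif c 0 0).le
  set s := (∑ w, y w ^ k) ^ ((k : ℝ)⁻¹)
  have hs : s ^ k = ∑ w, y w ^ k := Real.rpow_inv_natCast_pow (sum_pow_pos hy hy0).le hk
  have hspos : 0 < s := Real.rpow_pos_of_pos (sum_pow_pos hy hy0) _
  have hmem : s⁻¹ • y ∈ K := by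
    refine ⟨smul_nonneg (inv_nonneg.2 hspos.le) hy, ?_⟩
    simp only [Pi.smul_apply, smul_eq_mul, mul_pow, ← mul_sum, inv_pow, hs]
    exact inv_mul_cancel₀ (sum_pow_pos hy hy0).ne'
  have h : weightedForm k E c (s⁻¹ • y) ≤ weightedForm k E c z := hmax hmem
  rw [weightedForm_smul hunif, inv_pow, hs] at h
  rwa [inv_mul_le_iff₀ (sum_pow_pos hy hy0), mul_comm] at h

end

variable [DecidableEq W]

def hypAdj {R : Type*} [CommSemiring R] (E : Finset (Finset W)) (x : W → R) (w : W) : R :=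
  ∑ e ∈ E.filter (fun e => w ∈ e), ∏ p ∈ e.erase w, x p

lemma hypAdj_smul {R : Type*} [CommSemiring R] (hunif : ∀ e ∈ E, e.card = k) (a : R)
    (x : W → R) (w : W) : hypAdj E (a • x) w = a ^ (k - 1) * hypAdj E x w := by
  rw [hypAdj, hypAdj, mul_sum]
  refine sum_congr rfl fun e he => ?_
  obtain ⟨heE, hwe⟩ := mem_filter.mp he
  simp only [Pi.smul_apply, smul_eq_mul, prod_mul_distrib, prod_const,
    card_erase_of_mem hwe, hunif e heE]

lemma map_hypAdj {R S : Type*} [CommSemiring R] [CommSemiring S] (f : R →+* S)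
    (x : W → R) (w : W) : f (hypAdj E x w) = hypAdj E (fun p => f (x p)) w := by
  simp only [hypAdj, map_sum, map_prod]

lemma norm_hypAdj_le {𝕜 : Type*} [NormedField 𝕜] (x : W → 𝕜) (w : W) :
    ‖hypAdj E x w‖ ≤ hypAdj E (fun p => ‖x p‖) w := by
  refine (norm_sum_le _ _).trans_eq ?_
  simp only [norm_prod, hypAdj]

lemma edgeForm_update_add {R : Type*} [CommRing R] (x : W → R) (w : W) (t : R) :
    edgeForm E (Function.update x w (x w + t)) = edgeForm E x + t * hypAdj E x w := by
  rw [edgeForm, edgeForm, hypAdj, sum_filter, mul_sum, ← sum_add_distrib]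
  refine sum_congr rfl fun e _ => ?_
  by_cases hwe : w ∈ e
  · rw [prod_update_of_mem hwe, sdiff_singleton_eq_erase, if_pos hwe,
      ← mul_prod_erase e x hwe]
    ring
  · rw [prod_update_of_notMem hwe, if_neg hwe, mul_zero, add_zero]

variable [Fintype W]

lemma sum_mul_hypAdj {R : Type*} [CommSemiring R] (hunif : ∀ e ∈ E, e.card = k) (x : W → R) :
    ∑ w, x w * hypAdj E x w = k * edgeForm E x := by
  simp only [hypAdj, edgeForm, mul_sum]
  rw [sum_comm' (t' := E) (s' := fun e => e) (by simp [and_comm])]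
  refine sum_congr rfl fun e he => ?_
  rw [sum_congr rfl fun w hw => mul_prod_erase e x hw, sum_const, hunif e he, nsmul_eq_mul]

lemma sum_apply_update (F : W → ℝ → ℝ) (z : W → ℝ) (w : W) (a : ℝ) :
    ∑ v, F v (Function.update z w a v) = ∑ v, F v (z v) + (F w a - F w (z w)) := by
  rw [← add_sum_erase _ _ (mem_univ w), ← add_sum_erase _ _ (mem_univ w),
    sum_congr rfl fun v hv => by rw [Function.update_of_ne (ne_of_mem_erase hv)],
    Function.update_self]
  ring
lemma weightedForm_sub_mul_sum (hk : k ≠ 0) (hunif : ∀ e ∈ E, e.card = k) (c z : W → ℝ)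
    (μ : ℝ) : weightedForm k E c z - μ * ∑ w, z w ^ k =
      ∑ w, z w * (c w * z w ^ (k - 1) + hypAdj E z w - μ * z w ^ (k - 1)) := by
  have hpow : ∀ w, z w * z w ^ (k - 1) = z w ^ k := fun w => by
    rw [← pow_succ', Nat.sub_add_cancel (Nat.one_le_iff_ne_zero.2 hk)]
  rw [weightedForm, ← sum_mul_hypAdj hunif, mul_sum, ← sum_add_distrib, ← sum_sub_distrib]
  refine sum_congr rfl fun w _ => ?_
  linear_combination (μ - c w) * hpow w

-- Raising the zero coordinates of the edge `e` to `t` gains `k t ^ m P` in the form, where `m`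
-- counts those coordinates, and costs at most `|W| t ^ k` in the power sum.
lemma mul_pow_mul_prod_le (hunif : ∀ e ∈ E, e.card = k) {c : W → ℝ} (hc : 0 ≤ c) {ρ : ℝ}
    (hρ : 0 ≤ ρ) (hbd : IsFormBound k E c ρ) {y : W → ℝ} (hy : 0 ≤ y)
    (heq : weightedForm k E c y = ρ * ∑ w, y w ^ k) {e : Finset W} (he : e ∈ E) {q : W}
    (hq : q ∈ e) (hyq : y q = 0) {t : ℝ} (ht : 0 ≤ t) :
    k * (t ^ #(e.filter (fun v => y v = 0)) * ∏ v ∈ e.filter (fun v => ¬ y v = 0), y v) ≤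
      ρ * (Fintype.card W * t ^ k) := by
  have hk : k ≠ 0 := by rw [← hunif e he]; exact card_ne_zero_of_mem hq
  set T := e.filter (fun v => y v = 0)
  set y' := T.piecewise (fun _ => t) y
  have hle : y ≤ y' := fun v => by
    by_cases hv : v ∈ T
    · simp [y', hv, (mem_filter.1 hv).2, ht]
    · simp [y', hv]
  have hN : ∑ v, y' v ^ k ≤ ∑ v, y v ^ k + Fintype.card W * t ^ k := by
    calc ∑ v, y' v ^ k ≤ ∑ v, (y v ^ k + t ^ k) := sum_le_sum fun v _ => by
          by_cases hv : v ∈ T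
          · simp [y', hv, (mem_filter.1 hv).2, zero_pow hk]
          · simp [y', hv, pow_nonneg ht]
      _ = _ := by rw [sum_add_distrib, sum_const, card_univ, nsmul_eq_mul]
  have hT : ∏ v ∈ T, y' v = t ^ #T := by
    rw [prod_congr rfl fun v hv => piecewise_eq_of_mem T (fun _ => t) y hv, prod_const]
  have hP : ∏ v ∈ e.filter (fun v => ¬ y v = 0), y' v = ∏ v ∈ e.filter (fun v => ¬ y v = 0), y v :=
    prod_congr rfl fun v hv => piecewise_eq_of_notMem T (fun _ => t) y
      fun h => (mem_filter.1 hv).2 (mem_filter.1 h).2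
  have hprod : ∏ v ∈ e, y' v = t ^ #T * ∏ v ∈ e.filter (fun v => ¬ y v = 0), y v := by
    rw [← prod_filter_mul_prod_filter_not e (fun v => y v = 0), hT, hP]
  have hgain := weightedForm_add_le (k := k) hc hy hle he
  rw [prod_eq_zero hq hyq, sub_zero, hprod] at hgain
  have hcost := (hbd y' (hy.trans hle)).trans (mul_le_mul_of_nonneg_left hN hρ)
  linarith

lemma pos_of_weightedForm_eq (hunif : ∀ e ∈ E, e.card = k)
    (hconn : ∀ a b : W, Relation.ReflTransGen (fun p q => ∃ e ∈ E, p ∈ e ∧ q ∈ e) a b)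
    {c : W → ℝ} (hc : 0 ≤ c) {ρ : ℝ} (hρ : 0 ≤ ρ) (hbd : IsFormBound k E c ρ) {y : W → ℝ}
    (hy : 0 ≤ y) (hy0 : y ≠ 0) (heq : weightedForm k E c y = ρ * ∑ w, y w ^ k) (w : W) :
    0 < y w := by
  by_contra! hw
  obtain ⟨a, ha⟩ : ∃ a, y a ≠ 0 := Function.ne_iff.mp hy0
  obtain ⟨e, he, ⟨p, hp, hpy⟩, q, hq, hqy⟩ := exists_mem_edge_of_reflTransGen
    (P := fun v => y v ≠ 0) (hconn a w) ha (not_not.2 (le_antisymm hw (hy w)))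
  have hk : k ≠ 0 := by rw [← hunif e he]; exact card_ne_zero_of_mem hp
  set P := ∏ v ∈ e.filter (fun v => ¬ y v = 0), y v with hPdef
  have hP : 0 < P := prod_pos fun v hv => lt_of_le_of_ne (hy v) (Ne.symm (mem_filter.1 hv).2)
  have hm : #(e.filter (fun v => y v = 0)) ≤ k - 1 := by
    rw [← hunif e he]
    exact Nat.le_sub_one_of_lt
      (card_lt_card ⟨filter_subset _ _, fun h => hpy (mem_filter.1 (h hp)).2⟩)
  have key : ∀ t : ℝ, 0 < t → t ≤ 1 → k * P ≤ ρ * Fintype.card W * t := by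
    intro t ht0 ht1
    have h := mul_pow_mul_prod_le hunif hc hρ hbd hy heq he hq (not_not.1 hqy) ht0.le
    rw [← hPdef] at h
    have hpow := mul_le_mul_of_nonneg_left (pow_le_pow_of_le_one ht0.le ht1 hm)
      (mul_nonneg (Nat.cast_nonneg (α := ℝ) k) hP.le)
    have htk : t ^ k = t * t ^ (k - 1) := by
      rw [← pow_succ', Nat.sub_add_cancel (Nat.one_le_iff_ne_zero.2 hk)]
    rw [htk] at h
    refine le_of_mul_le_mul_right ?_ (pow_pos ht0 (k - 1))
    linarith
  have htend : Tendsto (fun t => ρ * Fintype.card W * t) (𝓝[>] 0) (𝓝 0) := by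
    simpa using ((continuous_const_mul (ρ * Fintype.card W)).tendsto (0 : ℝ)).mono_left
      nhdsWithin_le_nhds
  have hkP : (k : ℝ) * P ≤ 0 := ge_of_tendsto htend <| by
    filter_upwards [Ioc_mem_nhdsGT one_pos] with t ht using key t ht.1 ht.2
  have : (0 : ℝ) < k * P := mul_pos (by exact_mod_cast Nat.pos_of_ne_zero hk) hP
  linarith

lemma sub_mul_pow_eq_hypAdj (hk : k ≠ 0) {c : W → ℝ} {ρ : ℝ} (hbd : IsFormBound k E c ρ)
    {z : W → ℝ} (hz : ∀ w, 0 < z w) (heq : weightedForm k E c z = ρ * ∑ w, z w ^ k) (w : W) :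
    (ρ - c w) * z w ^ (k - 1) = hypAdj E z w := by
  set g : ℝ → ℝ := fun t => (ρ - c w) * ((z w + t) ^ k - z w ^ k) - k * (t * hypAdj E z w)
  -- `g t` is the slack `ρ ∑ y ^ k - φ_c y` of the bound at `y = update z w (z w + t)`.
  have hmin : IsLocalMin g 0 := by
    refine Filter.mem_of_superset (Ioi_mem_nhds (neg_lt_zero.2 (hz w))) fun t ht => ?_
    have hy : 0 ≤ Function.update z w (z w + t) := fun v => by
      rcases eq_or_ne v w with rfl | hv
      · simpa using (neg_lt_iff_pos_add'.1 ht).le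
      · simpa [hv] using (hz v).le
    have := hbd _ hy
    rw [weightedForm, edgeForm_update_add, sum_apply_update (fun v a => c v * a ^ k),
      sum_apply_update (fun _ a => a ^ k)] at this
    rw [weightedForm] at heq
    show g 0 ≤ g t
    simp only [g, add_zero, sub_self, mul_zero, zero_mul]
    linarith
  have hderiv : HasDerivAt g ((ρ - c w) * (k * z w ^ (k - 1)) - k * hypAdj E z w) 0 := by
    have h := (((hasDerivAt_id (0 : ℝ)).const_add (z w)).pow k).sub_const (z w ^ k)
    exact ((h.const_mul (ρ - c w)).sub (((hasDerivAt_id (0 : ℝ)).mul_const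
      (hypAdj E z w)).const_mul (k : ℝ))).congr_deriv (by simp)
  have := hmin.hasDerivAt_eq_zero hderiv
  have hk' : (k : ℝ) ≠ 0 := Nat.cast_ne_zero.2 hk
  apply mul_left_cancel₀ hk'
  linear_combination this

end Forms

section Spectrum

variable {W : Type*} [DecidableEq W] {k : ℕ} {E : Finset (Finset W)}

/-- With `c = 0` this is `σ A(H)`; with `c = d` the degree vector it is `L(H)` for `σ = -1` and
`Q(H)` for `σ = 1`. -/
def weightedOp (k : ℕ) (E : Finset (Finset W)) (c : W → ℝ) (σ : ℂ) (x : W → ℂ) (w : W) : ℂ :=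
  c w * x w ^ (k - 1) + σ * hypAdj E x w

/-- The edge condition under which the diagonal similarity by `γ` turns `A(H)` into `-A(H)`. -/
def NegatesAdj (k : ℕ) (E : Finset (Finset W)) (γ : W → ℂ) : Prop :=
  ∀ e ∈ E, ∀ w ∈ e, ∏ p ∈ e.erase w, γ p = -γ w ^ (k - 1)

noncomputable def diagSimilar (γ : W → ℂ) (i₀ : Fin k) (S : (Fin k → W) → ℂ) (t : Fin k → W) :
    ℂ :=
  (γ (t i₀))⁻¹ ^ (k - 1) * (S t * ∏ i ∈ univ.erase i₀, γ (t i))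

lemma hypAdj_mul_of_negatesAdj {γ : W → ℂ} (h : NegatesAdj k E γ) (x : W → ℂ) (w : W) :
    hypAdj E (γ * x) w = -γ w ^ (k - 1) * hypAdj E x w := by
  rw [hypAdj, hypAdj, mul_sum]
  refine sum_congr rfl fun e he => ?_
  obtain ⟨heE, hwe⟩ := mem_filter.mp he
  rw [← h e heE w hwe, ← prod_mul_distrib]
  rfl

lemma isPowEigenvalue_weightedOp_neg_iff {γ : W → ℂ} (hγ : ∀ w, γ w ≠ 0) (h : NegatesAdj k E γ)
    (c : W → ℝ) (σ μ : ℂ) :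
    IsPowEigenvalue (k - 1) (weightedOp k E c (-σ)) μ ↔
      IsPowEigenvalue (k - 1) (weightedOp k E c σ) μ := by
  have hconj : ∀ σ : ℂ, ∀ x w, weightedOp k E c σ (γ * x) w =
      γ w ^ (k - 1) * weightedOp k E c (-σ) x w := fun σ x w => by
    simp only [weightedOp, hypAdj_mul_of_negatesAdj h, Pi.mul_apply, mul_pow]
    ring
  exact ⟨IsPowEigenvalue.of_conj hγ (hconj σ),
    IsPowEigenvalue.of_conj hγ (by simpa using hconj (-σ))⟩

lemma weightedOp_smul (hunif : ∀ e ∈ E, e.card = k) (c : W → ℝ) (σ a : ℂ) (x : W → ℂ) :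
    weightedOp k E c σ (a • x) = a ^ (k - 1) • weightedOp k E c σ x := by
  funext w
  simp only [weightedOp, hypAdj_smul hunif, Pi.smul_apply, smul_eq_mul, mul_pow]
  ring

lemma continuous_weightedOp [Fintype W] (c : W → ℝ) (σ : ℂ) :
    Continuous (weightedOp k E c σ) :=
  continuous_pi fun w => by unfold weightedOp hypAdj; fun_prop

lemma norm_weightedOp_le {c : W → ℝ} (hc : 0 ≤ c) {σ : ℂ} (hσ : ‖σ‖ = 1) (x : W → ℂ) (w : W) :
    ‖weightedOp k E c σ x w‖ ≤ c w * ‖x w‖ ^ (k - 1) + hypAdj E (fun p => ‖x p‖) w := by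
  refine (norm_add_le _ _).trans (add_le_add (le_of_eq ?_) ?_)
  · rw [norm_mul, norm_pow, Complex.norm_real, Real.norm_of_nonneg (hc w)]
  · rw [norm_mul, hσ, one_mul]
    exact norm_hypAdj_le x w

lemma isPowEigenvalue_of_hypAdj_eq {c z : W → ℝ} {ρ : ℝ} (hz : z ≠ 0)
    (h : ∀ w, (ρ - c w) * z w ^ (k - 1) = hypAdj E z w) :
    IsPowEigenvalue (k - 1) (weightedOp k E c 1) ρ := by
  refine ⟨fun w => z w, fun h0 => hz (funext fun w => Complex.ofReal_eq_zero.1 (congrFun h0 w)),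
    fun w => ?_⟩
  have := congrArg Complex.ofRealHom (h w)
  rw [map_hypAdj] at this
  simp only [Complex.ofRealHom_eq_coe] at this
  rw [weightedOp, one_mul, ← this]
  push_cast
  ring

lemma negatesAdj_of_sameRay {x : W → ℂ} (hx : ∀ w, x w ≠ 0)
    (h : ∀ e ∈ E, ∀ w ∈ e, SameRay ℝ (-∏ p ∈ e.erase w, x p) (x w ^ (k - 1))) :
    NegatesAdj k E (fun w => x w / ‖x w‖) := by
  intro e he w hw
  have hnorm : ∀ p, ((‖x p‖ : ℝ) : ℂ) ≠ 0 := fun p => by simpa using hx p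
  have hray := (h e he w hw).norm_smul_eq
  simp only [norm_neg, norm_prod, norm_pow, Complex.real_smul, Complex.ofReal_prod,
    Complex.ofReal_pow] at hray
  rw [prod_div_distrib, div_pow, ← neg_div, div_eq_div_iff (prod_ne_zero_iff.2 fun p _ => hnorm p)
    (pow_ne_zero _ (hnorm w))]
  linear_combination hray

lemma exists_negatesAdj_of_sameRay {x : W → ℂ} {μ : ℂ} (hx : ∀ w, x w ≠ 0) (hμ : μ ≠ 0)
    (hdir : ∀ e ∈ E, ∀ w ∈ e, SameRay ℝ (μ * x w ^ (k - 1)) (x w ^ (k - 1)))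
    (h : ∀ e ∈ E, ∀ w ∈ e, SameRay ℝ (-∏ p ∈ e.erase w, x p) (μ * x w ^ (k - 1))) :
    ∃ γ : W → ℂ, (∀ w, ‖γ w‖ = 1) ∧ NegatesAdj k E γ :=
  ⟨fun w => x w / ‖x w‖, fun w => by simp [hx w], negatesAdj_of_sameRay hx fun e he w hw =>
    (h e he w hw).trans (hdir e he w hw) fun h0 =>
      absurd h0 (mul_ne_zero hμ (pow_ne_zero _ (hx w)))⟩

lemma exists_injective_image_eq {e : Finset W} (he : e.card = k) {w : W} (hw : w ∈ e)
    (i₀ : Fin k) : ∃ t : Fin k → W, Function.Injective t ∧ univ.image t = e ∧ t i₀ = w := by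
  set f : Fin k ≃ e := (e.equivFinOfCardEq he).symm
  set σ := Equiv.swap i₀ (f.symm ⟨w, hw⟩)
  refine ⟨fun i => f (σ i), Subtype.val_injective.comp (f.injective.comp σ.injective), ?_,
    by simp [σ]⟩
  ext v
  simp only [mem_image, mem_univ, true_and]
  exact ⟨fun ⟨i, hi⟩ => hi ▸ (f (σ i)).2, fun hv => ⟨σ.symm (f.symm ⟨v, hv⟩), by simp⟩⟩

lemma prod_univ_erase_comp {t : Fin k → W} (ht : Function.Injective t) (i₀ : Fin k)
    (γ : W → ℂ) : ∏ i ∈ univ.erase i₀, γ (t i) = ∏ p ∈ (univ.image t).erase (t i₀), γ p := by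
  rw [← image_erase ht, prod_image ht.injOn]

variable [Fintype W]

lemma isAdjEig_iff {μ : ℂ} :
    IsAdjEig k E μ ↔ IsPowEigenvalue (k - 1) (weightedOp k E 0 1) μ := by
  simp [IsAdjEig, IsPowEigenvalue, weightedOp, hypAdj]

lemma isAdjEig_neg_iff {μ : ℂ} :
    IsAdjEig k E (-μ) ↔ IsPowEigenvalue (k - 1) (weightedOp k E 0 (-1)) μ := by
  simp only [IsAdjEig, IsPowEigenvalue, weightedOp, hypAdj]
  refine exists_congr fun x => and_congr_right fun _ => forall_congr' fun w => ?_
  simp only [Pi.zero_apply, Complex.ofReal_zero, zero_mul, zero_add]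
  constructor <;> intro h <;> linear_combination -h

lemma isLapEig_iff {μ : ℂ} :
    IsLapEig k E μ ↔
      IsPowEigenvalue (k - 1) (weightedOp k E (fun w => hypDegree E w) (-1)) μ := by
  simp only [IsLapEig, IsPowEigenvalue, weightedOp, hypAdj, Complex.ofReal_natCast]
  refine exists_congr fun x => and_congr_right fun _ => forall_congr' fun w => ?_
  constructor <;> intro h <;> linear_combination -h

lemma isSignlessEig_iff {μ : ℂ} :
    IsSignlessEig k E μ ↔
      IsPowEigenvalue (k - 1) (weightedOp k E (fun w => hypDegree E w) 1) μ := by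
  simp only [IsSignlessEig, IsPowEigenvalue, weightedOp, hypAdj, Complex.ofReal_natCast]
  refine exists_congr fun x => and_congr_right fun _ => forall_congr' fun w => ?_
  constructor <;> intro h <;> linear_combination h

lemma isAdjEig_iff_isAdjEig_neg_of_negatesAdj {γ : W → ℂ} (hγ : ∀ w, γ w ≠ 0)
    (h : NegatesAdj k E γ) (μ : ℂ) : IsAdjEig k E μ ↔ IsAdjEig k E (-μ) := by
  rw [isAdjEig_iff, isAdjEig_neg_iff]
  exact (isPowEigenvalue_weightedOp_neg_iff hγ h 0 1 μ).symm

lemma isLapEig_iff_isSignlessEig_of_negatesAdj {γ : W → ℂ} (hγ : ∀ w, γ w ≠ 0)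
    (h : NegatesAdj k E γ) (μ : ℂ) : IsLapEig k E μ ↔ IsSignlessEig k E μ := by
  rw [isLapEig_iff, isSignlessEig_iff]
  exact isPowEigenvalue_weightedOp_neg_iff hγ h _ 1 μ

theorem exists_isFormBound_isPowEigenvalue (hk : k ≠ 0) (hunif : ∀ e ∈ E, e.card = k)
    (hE : E.Nonempty)
    (hconn : ∀ a b : W, Relation.ReflTransGen (fun p q => ∃ e ∈ E, p ∈ e ∧ q ∈ e) a b)
    {c : W → ℝ} (hc : 0 ≤ c) :
    ∃ ρ, IsFormBound k E c ρ ∧ IsPowEigenvalue (k - 1) (weightedOp k E c 1) ρ := by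
  obtain ⟨e, he⟩ := hE
  obtain ⟨w₀, -⟩ : e.Nonempty := card_pos.1 (by rw [hunif e he]; exact Nat.pos_of_ne_zero hk)
  have : Nonempty W := ⟨w₀⟩
  obtain ⟨ρ, hbd, z, hz0, hz1, hρ⟩ := exists_isFormBound hk hunif (E := E) c
  have heq : weightedForm k E c z = ρ * ∑ w, z w ^ k := by rw [hz1, mul_one, hρ]
  have hz : z ≠ 0 := by rintro rfl; simp [zero_pow hk] at hz1
  have hzpos := pos_of_weightedForm_eq hunif hconn hc (hbd.pos hk ⟨e, he⟩ hc).le hbd hz0 hz heq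
  exact ⟨ρ, hbd, isPowEigenvalue_of_hypAdj_eq hz (sub_mul_pow_eq_hypAdj hk hbd hzpos heq)⟩

theorem norm_le_of_isPowEigenvalue (hk : k ≠ 0) (hunif : ∀ e ∈ E, e.card = k) {c : W → ℝ}
    (hc : 0 ≤ c) {ρ : ℝ} (hbd : IsFormBound k E c ρ) {σ : ℂ} (hσ : ‖σ‖ = 1) {μ : ℂ}
    (h : IsPowEigenvalue (k - 1) (weightedOp k E c σ) μ) : ‖μ‖ ≤ ρ := by
  obtain ⟨x, hx, hμ⟩ := h
  set z : W → ℝ := fun p => ‖x p‖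
  have hz : z ≠ 0 := fun h0 => hx (funext fun w => norm_eq_zero.1 (congrFun h0 w))
  have hslack : 0 ≤ weightedForm k E c z - ‖μ‖ * ∑ w, z w ^ k := by
    rw [weightedForm_sub_mul_sum hk hunif]
    refine sum_nonneg fun w _ => mul_nonneg (norm_nonneg _) (sub_nonneg.2 ?_)
    have h := norm_weightedOp_le (k := k) (E := E) hc hσ x w
    rwa [← hμ w, norm_mul, norm_pow] at h
  have hpos := sum_pow_pos (k := k) (fun w => norm_nonneg (x w)) hz
  nlinarith [hbd z fun w => norm_nonneg (x w)]

theorem norm_pos_and_eq_of_norm_eq (hk : k ≠ 0) (hunif : ∀ e ∈ E, e.card = k)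
    (hconn : ∀ a b : W, Relation.ReflTransGen (fun p q => ∃ e ∈ E, p ∈ e ∧ q ∈ e) a b)
    {c : W → ℝ} (hc : 0 ≤ c) {ρ : ℝ} (hbd : IsFormBound k E c ρ) {σ μ : ℂ} (hσ : ‖σ‖ = 1)
    (hμ : ‖μ‖ = ρ) {x : W → ℂ} (hx : x ≠ 0)
    (heig : ∀ w, μ * x w ^ (k - 1) = weightedOp k E c σ x w) :
    (∀ w, 0 < ‖x w‖) ∧ ∀ w,
      c w * ‖x w‖ ^ (k - 1) + hypAdj E (fun p => ‖x p‖) w = ρ * ‖x w‖ ^ (k - 1) := by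
  set z : W → ℝ := fun p => ‖x p‖
  have hz0 : 0 ≤ z := fun w => norm_nonneg (x w)
  have hz : z ≠ 0 := fun h0 => hx (funext fun w => norm_eq_zero.1 (congrFun h0 w))
  have hslack : ∀ w, 0 ≤ c w * z w ^ (k - 1) + hypAdj E z w - ρ * z w ^ (k - 1) := fun w => by
    have h := norm_weightedOp_le (k := k) (E := E) hc hσ x w
    rw [← heig w, norm_mul, norm_pow, hμ] at h
    exact sub_nonneg.2 h
  have hsum := weightedForm_sub_mul_sum hk hunif c z ρ
  have heq : weightedForm k E c z = ρ * ∑ w, z w ^ k :=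
    le_antisymm (hbd z hz0)
      (sub_nonneg.1 (hsum ▸ sum_nonneg fun w _ => mul_nonneg (hz0 w) (hslack w)))
  have hzpos := pos_of_weightedForm_eq hunif hconn hc (hμ ▸ norm_nonneg μ) hbd hz0 hz heq
  refine ⟨hzpos, fun w => ?_⟩
  rw [heq, sub_self, eq_comm, sum_eq_zero_iff_of_nonneg fun w _ =>
    mul_nonneg (hz0 w) (hslack w)] at hsum
  have := (mul_eq_zero.1 (hsum w (mem_univ w))).resolve_left (hzpos w).ne'
  linarith

theorem sameRay_of_norm_eq (hk : k ≠ 0) (hunif : ∀ e ∈ E, e.card = k)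
    (hconn : ∀ a b : W, Relation.ReflTransGen (fun p q => ∃ e ∈ E, p ∈ e ∧ q ∈ e) a b)
    {c : W → ℝ} (hc : 0 ≤ c) {ρ : ℝ} (hbd : IsFormBound k E c ρ) {σ μ : ℂ} (hσ : ‖σ‖ = 1)
    (hμ : ‖μ‖ = ρ) {x : W → ℂ} (hx : x ≠ 0)
    (heig : ∀ w, μ * x w ^ (k - 1) = weightedOp k E c σ x w) :
    (∀ w, x w ≠ 0) ∧ ∀ e ∈ E, ∀ w ∈ e,
      SameRay ℝ (c w * x w ^ (k - 1)) (μ * x w ^ (k - 1)) ∧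
      SameRay ℝ (σ * ∏ p ∈ e.erase w, x p) (μ * x w ^ (k - 1)) := by
  obtain ⟨hzpos, hpt⟩ := norm_pos_and_eq_of_norm_eq hk hunif hconn hc hbd hσ hμ hx heig
  refine ⟨fun w => norm_ne_zero_iff.1 (hzpos w).ne', fun e he w hw => ?_⟩
  have hsplit : μ * x w ^ (k - 1) = c w * x w ^ (k - 1) +
      ∑ e ∈ E.filter (fun e => w ∈ e), σ * ∏ p ∈ e.erase w, x p := by
    rw [heig, weightedOp, hypAdj, mul_sum]
  have hnorm : ‖(c w : ℂ) * x w ^ (k - 1)‖ +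
      ∑ e ∈ E.filter (fun e => w ∈ e), ‖σ * ∏ p ∈ e.erase w, x p‖ ≤
      ‖(c w : ℂ) * x w ^ (k - 1) + ∑ e ∈ E.filter (fun e => w ∈ e), σ * ∏ p ∈ e.erase w, x p‖ := by
    rw [← hsplit, norm_mul μ, norm_pow, hμ, ← hpt w, norm_mul, norm_pow, Complex.norm_real,
      Real.norm_of_nonneg (hc w)]
    simp [hσ, hypAdj]
  rw [hsplit]
  exact ⟨(sameRay_add_sum_of_norm_le hnorm).1,
    (sameRay_add_sum_of_norm_le hnorm).2 e (mem_filter.2 ⟨he, hw⟩)⟩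

theorem exists_negatesAdj_of_isPowEigenvalue_neg (hk : k ≠ 0) (hunif : ∀ e ∈ E, e.card = k)
    (hconn : ∀ a b : W, Relation.ReflTransGen (fun p q => ∃ e ∈ E, p ∈ e ∧ q ∈ e) a b)
    {ρ : ℝ} (hbd : IsFormBound k E 0 ρ) (hρ : 0 < ρ)
    (h : IsPowEigenvalue (k - 1) (weightedOp k E 0 (-1)) ρ) :
    ∃ γ : W → ℂ, (∀ w, ‖γ w‖ = 1) ∧ NegatesAdj k E γ := by
  obtain ⟨x, hx, heig⟩ := h
  obtain ⟨hx0, hray⟩ := sameRay_of_norm_eq hk hunif hconn le_rfl hbd (by simp)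
    (by simp [hρ.le]) hx heig
  refine exists_negatesAdj_of_sameRay hx0 (Complex.ofReal_ne_zero.2 hρ.ne') (fun e _ w _ => ?_)
    fun e he w hw => by simpa using (hray e he w hw).2
  simpa [Complex.real_smul] using SameRay.sameRay_pos_smul_left (x w ^ (k - 1)) hρ

theorem exists_negatesAdj_of_isPowEigenvalue_lap (hk : k ≠ 0) (hunif : ∀ e ∈ E, e.card = k)
    (hconn : ∀ a b : W, Relation.ReflTransGen (fun p q => ∃ e ∈ E, p ∈ e ∧ q ∈ e) a b)
    {ρ : ℝ} (hbd : IsFormBound k E (fun w => hypDegree E w) ρ) (hρ : 0 < ρ) {μ : ℂ}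
    (h : IsPowEigenvalue (k - 1) (weightedOp k E (fun w => hypDegree E w) (-1)) μ)
    (hμ : ‖μ‖ = ρ) : ∃ γ : W → ℂ, (∀ w, ‖γ w‖ = 1) ∧ NegatesAdj k E γ := by
  obtain ⟨x, hx, heig⟩ := h
  obtain ⟨hx0, hray⟩ := sameRay_of_norm_eq hk hunif hconn (fun w => Nat.cast_nonneg _) hbd
    (by simp) hμ hx heig
  refine exists_negatesAdj_of_sameRay hx0 (norm_pos_iff.1 (hμ ▸ hρ)) (fun e he w hw => ?_)
    fun e he w hw => by simpa using (hray e he w hw).2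
  -- `μ x_w ^ (k-1)` is aligned with `d_w x_w ^ (k-1)`, a positive multiple of `x_w ^ (k-1)`.
  have hd : 0 < (hypDegree E w : ℝ) := Nat.cast_pos.2 (card_pos.2 ⟨e, mem_filter.2 ⟨he, hw⟩⟩)
  refine (hray e he w hw).1.symm.trans ?_ fun h0 =>
    absurd h0 (mul_ne_zero (by exact_mod_cast hd.ne') (pow_ne_zero _ (hx0 w)))
  simpa [Complex.real_smul] using SameRay.sameRay_pos_smul_left (x w ^ (k - 1)) hd

lemma diagSimilar_diagEnt {γ : W → ℂ} (hγ : ∀ w, γ w ≠ 0) (i₀ : Fin k) :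
    diagSimilar γ i₀ (diagEnt k E) = diagEnt k E := by
  funext t
  by_cases h : ∃ w, ∀ i, t i = w
  · obtain ⟨w, hw⟩ := h
    have : ∏ i ∈ univ.erase i₀, γ (t i) = γ (t i₀) ^ (k - 1) := by
      simp [hw, prod_const, card_erase_of_mem]
    rw [diagSimilar, this, inv_pow, mul_comm, mul_assoc, mul_inv_cancel₀ (pow_ne_zero _ (hγ _)),
      mul_one]
  · simp [diagSimilar, diagEnt, h]

lemma forall_neg_adjEnt_eq_diagSimilar_iff (hunif : ∀ e ∈ E, e.card = k) {γ : W → ℂ}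
    (hγ : ∀ w, γ w ≠ 0) (i₀ : Fin k) :
    (∀ t, -adjEnt k E t = diagSimilar γ i₀ (adjEnt k E) t) ↔ NegatesAdj k E γ := by
  constructor
  · intro h e he w hw
    obtain ⟨t, ht, hte, htw⟩ := exists_injective_image_eq (hunif e he) hw i₀
    have ha : ((Nat.factorial (k - 1) : ℂ))⁻¹ ≠ 0 := by simp [Nat.factorial_ne_zero]
    have := h t
    rw [diagSimilar, adjEnt, if_pos ⟨ht, hte ▸ he⟩, prod_univ_erase_comp ht, hte, htw] at this
    apply mul_left_cancel₀ ha
    calc _ = γ w ^ (k - 1) * ((γ w)⁻¹ ^ (k - 1) * ((Nat.factorial (k - 1) : ℂ)⁻¹ *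
          ∏ p ∈ e.erase w, γ p)) := by
            rw [inv_pow, mul_inv_cancel_left₀ (pow_ne_zero _ (hγ w))]
      _ = _ := by rw [← this]; ring
  · intro h t
    rw [diagSimilar]
    by_cases ht : Function.Injective t ∧ univ.image t ∈ E
    · rw [prod_univ_erase_comp ht.1, h _ ht.2 _ (mem_image_of_mem t (mem_univ i₀)), inv_pow]
      field_simp [hγ (t i₀)]
    · simp [adjEnt, ht]

lemma forall_diagEnt_sub_adjEnt_eq_diagSimilar_iff {γ : W → ℂ} (hγ : ∀ w, γ w ≠ 0) (i₀ : Fin k) :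
    (∀ t, diagEnt k E t - adjEnt k E t = diagSimilar γ i₀ (diagEnt k E + adjEnt k E) t) ↔
      ∀ t, -adjEnt k E t = diagSimilar γ i₀ (adjEnt k E) t := by
  refine forall_congr' fun t => ?_
  have hadd : diagSimilar γ i₀ (diagEnt k E + adjEnt k E) t =
      diagEnt k E t + diagSimilar γ i₀ (adjEnt k E) t := by
    rw [← congrFun (diagSimilar_diagEnt hγ i₀) t]
    simp only [diagSimilar, Pi.add_apply]
    ring
  rw [hadd]
  constructor <;> intro h <;> linear_combination h

theorem exists_isFormBound_csSup_isAdjEig (hk : k ≠ 0) (hunif : ∀ e ∈ E, e.card = k)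
    (hE : E.Nonempty)
    (hconn : ∀ a b : W, Relation.ReflTransGen (fun p q => ∃ e ∈ E, p ∈ e ∧ q ∈ e) a b) :
    ∃ ρ, IsFormBound k E 0 ρ ∧ 0 < ρ ∧ IsAdjEig k E ρ ∧
      sSup {r : ℝ | ∃ μ : ℂ, IsAdjEig k E μ ∧ r = ‖μ‖} = ρ := by
  obtain ⟨ρ, hbd, hρ⟩ := exists_isFormBound_isPowEigenvalue hk hunif hE hconn le_rfl
  have hρ0 := hbd.pos hk hE le_rfl
  exact ⟨ρ, hbd, hρ0, isAdjEig_iff.2 hρ, csSup_norm_eq (isAdjEig_iff.2 hρ) (by simp [hρ0.le])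
    fun μ hμ => norm_le_of_isPowEigenvalue hk hunif le_rfl hbd (by simp) (isAdjEig_iff.1 hμ)⟩

theorem exists_negatesAdj_of_csSup_eq (hk : k ≠ 0) (hunif : ∀ e ∈ E, e.card = k)
    (hE : E.Nonempty)
    (hconn : ∀ a b : W, Relation.ReflTransGen (fun p q => ∃ e ∈ E, p ∈ e ∧ q ∈ e) a b)
    (h : sSup {r : ℝ | ∃ μ : ℂ, IsLapEig k E μ ∧ r = ‖μ‖} =
      sSup {r : ℝ | ∃ μ : ℂ, IsSignlessEig k E μ ∧ r = ‖μ‖}) :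
    ∃ γ : W → ℂ, (∀ w, ‖γ w‖ = 1) ∧ NegatesAdj k E γ := by
  set d : W → ℝ := fun w => hypDegree E w
  obtain ⟨ρ, hbd, hρ⟩ := exists_isFormBound_isPowEigenvalue hk hunif hE hconn
    (c := d) fun w => Nat.cast_nonneg _
  have hρ0 := hbd.pos hk hE fun w => Nat.cast_nonneg _
  have hle : ∀ σ : ℂ, ‖σ‖ = 1 → ∀ μ, IsPowEigenvalue (k - 1) (weightedOp k E d σ) μ → ‖μ‖ ≤ ρ :=
    fun σ hσ μ => norm_le_of_isPowEigenvalue hk hunif (fun w => Nat.cast_nonneg _) hbd hσ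
  have hQ : sSup {r : ℝ | ∃ μ : ℂ, IsSignlessEig k E μ ∧ r = ‖μ‖} = ρ :=
    csSup_norm_eq (isSignlessEig_iff.2 hρ) (by simp [hρ0.le]) fun μ hμ =>
      hle 1 (by simp) μ (isSignlessEig_iff.1 hμ)
  have hclosed : IsClosed {μ | IsLapEig k E μ} := by
    simpa only [isLapEig_iff] using isClosed_setOf_isPowEigenvalue
      (continuous_weightedOp d (-1)) (weightedOp_smul hunif d (-1))
  obtain ⟨μ, hμ, hμρ⟩ := exists_norm_eq_csSup hclosed
    (fun μ hμ => hle (-1) (by simp) μ (isLapEig_iff.1 hμ)) (h.trans hQ ▸ hρ0)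
  exact exists_negatesAdj_of_isPowEigenvalue_lap hk hunif hconn hbd hρ0 (isLapEig_iff.1 hμ)
    (hμρ.trans (h.trans hQ))

end Spectrum

/-- Let `k` be even and let `H` be a connected `k`-uniform hypergraph with at least one edge
that is not odd-bipartite.  The following are equivalent: (1) `ρ^L(H) = ρ^Q(H)`; (2) `L(H)` is
obtained from `Q(H)` by a diagonal similarity with unit-modulus entries; (3) `L(H)` and `Q(H)`
have the same spectrum; (4) `−A(H)` is obtained from `A(H)` by a diagonal similarity with
unit-modulus entries; (5) the spectrum of `A(H)` is symmetric with respect to the origin;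
(6) `−ρ^A(H)` is an eigenvalue of `A(H)`. -/
theorem stmt15 {W : Type*} [Fintype W] [DecidableEq W] (k : ℕ)
    (hk : 2 ≤ k)
    (E : Finset (Finset W)) (hunif : ∀ e ∈ E, e.card = k) (hedge : E.Nonempty)
    (hconn : ∀ a b : W,
      Relation.ReflTransGen (fun p q => ∃ e ∈ E, p ∈ e ∧ q ∈ e) a b) :
    List.TFAE
      [ sSup {r : ℝ | ∃ lam : ℂ, IsLapEig k E lam ∧ r = ‖lam‖} =
          sSup {r : ℝ | ∃ lam : ℂ, IsSignlessEig k E lam ∧ r = ‖lam‖},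
        ∃ gamma : W → ℂ, (∀ w, ‖gamma w‖ = 1) ∧
          ∀ t : Fin k → W,
            diagEnt k E t - adjEnt k E t =
              (gamma (t ⟨0, by omega⟩))⁻¹ ^ (k - 1) *
                ((diagEnt k E t + adjEnt k E t) *
                  ∏ i ∈ Finset.univ.erase (⟨0, by omega⟩ : Fin k), gamma (t i)),
        {lam : ℂ | IsLapEig k E lam} = {lam : ℂ | IsSignlessEig k E lam},
        ∃ gamma : W → ℂ, (∀ w, ‖gamma w‖ = 1) ∧
          ∀ t : Fin k → W,
            -(adjEnt k E t) =
              (gamma (t ⟨0, by omega⟩))⁻¹ ^ (k - 1) *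
                (adjEnt k E t *
                  ∏ i ∈ Finset.univ.erase (⟨0, by omega⟩ : Fin k), gamma (t i)),
        ∀ lam : ℂ, IsAdjEig k E lam ↔ IsAdjEig k E (-lam),
        IsAdjEig k E
          (-(sSup {r : ℝ | ∃ lam : ℂ, IsAdjEig k E lam ∧ r = ‖lam‖} : ℝ)) ] := by
  have hk0 : k ≠ 0 := by omega
  have hunit : ∀ γ : W → ℂ, (∀ w, ‖γ w‖ = 1) → ∀ w, γ w ≠ 0 := fun γ hγ w =>
    norm_ne_zero_iff.1 (by simp [hγ w])
  have hsim : ∀ γ : W → ℂ, (∀ w, ‖γ w‖ = 1) → ((∀ t, -adjEnt k E t =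
      diagSimilar γ ⟨0, by omega⟩ (adjEnt k E) t) ↔ NegatesAdj k E γ) := fun γ hγ =>
    forall_neg_adjEnt_eq_diagSimilar_iff hunif (hunit γ hγ) _
  obtain ⟨ρ, hbd, hρ0, hρ, hsup⟩ := exists_isFormBound_csSup_isAdjEig hk0 hunif hedge hconn
  tfae_have 1 → 4 := fun h1 =>
    let ⟨γ, hγ, hneg⟩ := exists_negatesAdj_of_csSup_eq hk0 hunif hedge hconn h1
    ⟨γ, hγ, (hsim γ hγ).2 hneg⟩
  tfae_have 2 ↔ 4 := exists_congr fun γ => and_congr_right fun hγ =>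
    forall_diagEnt_sub_adjEnt_eq_diagSimilar_iff (hunit γ hγ) _
  tfae_have 4 → 3 := fun ⟨γ, hγ, h⟩ => Set.ext
    (isLapEig_iff_isSignlessEig_of_negatesAdj (hunit γ hγ) ((hsim γ hγ).1 h))
  tfae_have 3 → 1 := fun h3 => by
    have h : ∀ μ, IsLapEig k E μ ↔ IsSignlessEig k E μ := Set.ext_iff.1 h3
    simp only [h]
  tfae_have 4 → 5 := fun ⟨γ, hγ, h⟩ =>
    isAdjEig_iff_isAdjEig_neg_of_negatesAdj (hunit γ hγ) ((hsim γ hγ).1 h)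
  tfae_have 5 → 6 := fun h5 => hsup ▸ (h5 ρ).1 hρ
  tfae_have 6 → 4 := fun h6 => by
    rw [hsup, isAdjEig_neg_iff] at h6
    obtain ⟨γ, hγ, hneg⟩ := exists_negatesAdj_of_isPowEigenvalue_neg hk0 hunif hconn hbd hρ0 h6
    exact ⟨γ, hγ, (hsim γ hγ).2 hneg⟩
  tfae_finish
end
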